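/- arXiv:2509.12707 — 10 statements merged into one kernel-verified Lean document; each statement's English description precedes it below -/
import Mathlib

section
/- There exists a function f : ℝ → ℝ such that f(0) = 0, f is differentiable at every point with f'(t) = (1 + 2 f(t)²)^{-1/2} for all t ∈ ℝ, and f is infinitely differentiable (smooth) on ℝ. -/
open Filter

noncomputable def Gfun : ℝ → ℝ := fun y =>
  y * Real.sqrt (1 + 2 * y ^ 2) / 2
    + Real.sqrt 2 / 4 * Real.log (Real.sqrt 2 * y + Real.sqrt (1 + 2 * y ^ 2))

lemma u_pos (y : ℝ) : (0:ℝ) < 1 + 2 * y ^ 2 := by positivity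

lemma s_pos (y : ℝ) : 0 < Real.sqrt (1 + 2 * y ^ 2) := Real.sqrt_pos.2 (u_pos y)

lemma s_sq (y : ℝ) : Real.sqrt (1 + 2 * y ^ 2) ^ 2 = 1 + 2 * y ^ 2 :=
  Real.sq_sqrt (u_pos y).le

lemma q_sq : Real.sqrt 2 ^ 2 = 2 := Real.sq_sqrt (by norm_num)

lemma inner_pos (y : ℝ) : 0 < Real.sqrt 2 * y + Real.sqrt (1 + 2 * y ^ 2) := by
  nlinarith [s_pos y, s_sq y, q_sq, Real.sqrt_nonneg 2, sq_nonneg (Real.sqrt 2 * y + Real.sqrt (1 + 2 * y ^ 2)), sq_nonneg (Real.sqrt (1 + 2 * y ^ 2) - Real.sqrt 2 * y)]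

lemma Gfun_hasDerivAt (y : ℝ) : HasDerivAt Gfun (Real.sqrt (1 + 2 * y ^ 2)) y := by
  set s := Real.sqrt (1 + 2 * y ^ 2) with hsdef
  set q := Real.sqrt 2 with hqdef
  have hu : HasDerivAt (fun z : ℝ => 1 + 2 * z ^ 2) (4 * y) y := by
    have := ((hasDerivAt_pow 2 y).const_mul (2:ℝ)).const_add (1:ℝ)
    exact this.congr_deriv (by norm_num; ring)
  have hsqrt : HasDerivAt (fun z : ℝ => Real.sqrt (1 + 2 * z ^ 2)) (4 * y / (2 * s)) y :=
    hu.sqrt (u_pos y).ne'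
  have h1 : HasDerivAt (fun z : ℝ => z * Real.sqrt (1 + 2 * z ^ 2) / 2)
      ((1 * s + y * (4 * y / (2 * s))) / 2) y :=
    ((hasDerivAt_id y).mul hsqrt).div_const 2
  have hinner : HasDerivAt (fun z : ℝ => q * z + Real.sqrt (1 + 2 * z ^ 2))
      (q * 1 + 4 * y / (2 * s)) y :=
    ((hasDerivAt_id y).const_mul q).add hsqrt
  have hlog : HasDerivAt (fun z : ℝ => Real.log (q * z + Real.sqrt (1 + 2 * z ^ 2)))
      ((q * 1 + 4 * y / (2 * s)) / (q * y + s)) y :=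
    hinner.log (inner_pos y).ne'
  have h2 := (hlog.const_mul (q / 4)).add_const 0
  have := h1.add (hlog.const_mul (q / 4))
  refine HasDerivAt.congr_deriv this ?_
  have hs := s_pos y
  have hq : (0:ℝ) < q := Real.sqrt_pos.2 (by norm_num)
  have hin := inner_pos y
  have hs2 := s_sq y
  have hq2 : q ^ 2 = 2 := q_sq
  have hs' : s ≠ 0 := hs.ne'
  have hin' : y * q + s ≠ 0 := by rw [mul_comm]; exact hin.ne'
  have hs2' : s ^ 2 = 1 + 2 * y ^ 2 := hs2
  field_simp
  nlinarith [hs, hq, hin, hs2, hq2, sq_nonneg (s*q), mul_pos hs hin, mul_pos hq hs]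

open scoped ContDiff in
lemma sqrtU_contDiffAt (y : ℝ) :
    ContDiffAt ℝ ω (fun z : ℝ => Real.sqrt (1 + 2 * z ^ 2)) y := by
  have heq : (fun z : ℝ => Real.sqrt (1 + 2 * z ^ 2))
      = fun z : ℝ => Real.exp (Real.log (1 + 2 * z ^ 2) * (1 / 2)) := by
    funext z
    rw [Real.sqrt_eq_rpow, Real.rpow_def_of_pos (u_pos z)]
  rw [heq]
  have hu : ContDiffAt ℝ ω (fun z : ℝ => 1 + 2 * z ^ 2) y := by fun_prop
  have hlog : ContDiffAt ℝ ω (fun z : ℝ => Real.log (1 + 2 * z ^ 2)) y :=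
    (Real.contDiffAt_log.2 (u_pos y).ne').comp (g := Real.log) y hu
  exact Real.contDiff_exp.contDiffAt.comp y (hlog.mul contDiffAt_const)

open scoped ContDiff in
lemma Gfun_contDiffAt (y : ℝ) : ContDiffAt ℝ ω Gfun y := by
  have hs := sqrtU_contDiffAt y
  have hinner : ContDiffAt ℝ ω (fun z : ℝ => Real.sqrt 2 * z + Real.sqrt (1 + 2 * z ^ 2)) y :=
    (contDiffAt_const.mul contDiffAt_id).add hs
  have hlog : ContDiffAt ℝ ω
      (fun z : ℝ => Real.log (Real.sqrt 2 * z + Real.sqrt (1 + 2 * z ^ 2))) y :=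
    (Real.contDiffAt_log.2 (inner_pos y).ne').comp (g := Real.log) y hinner
  exact ((contDiffAt_id.mul hs).div_const 2).add (contDiffAt_const.mul hlog)

lemma Gfun_strictMono : StrictMono Gfun :=
  strictMono_of_deriv_pos fun y => by
    rw [(Gfun_hasDerivAt y).deriv]; exact s_pos y

lemma one_le_s (y : ℝ) : 1 ≤ Real.sqrt (1 + 2 * y ^ 2) := by
  nlinarith [s_sq y, s_pos y, sq_nonneg (Real.sqrt (1 + 2 * y ^ 2) - 1), sq_nonneg y]

lemma Gfun_zero : Gfun 0 = 0 := by
  simp [Gfun]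

lemma sub_mono : Monotone (fun y => Gfun y - y) := by
  apply monotone_of_deriv_nonneg
  · intro y
    exact ((Gfun_hasDerivAt y).sub (hasDerivAt_id y)).differentiableAt
  · intro y
    have h : HasDerivAt (fun y => Gfun y - y) (Real.sqrt (1 + 2 * y ^ 2) - 1) y :=
      (Gfun_hasDerivAt y).sub (hasDerivAt_id y)
    rw [h.deriv]
    linarith [one_le_s y]

lemma self_le_Gfun {y : ℝ} (hy : 0 ≤ y) : y ≤ Gfun y := by
  have := sub_mono hy
  simp [Gfun_zero] at this
  linarith

lemma Gfun_le_self {y : ℝ} (hy : y ≤ 0) : Gfun y ≤ y := by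
  have := sub_mono hy
  simp [Gfun_zero] at this
  linarith

lemma Gfun_surj : Function.Surjective Gfun := by
  have hc : Continuous Gfun := continuous_iff_continuousAt.2 fun y => (Gfun_contDiffAt y).continuousAt
  have ht : Tendsto Gfun atTop atTop :=
    tendsto_atTop_mono' _ ((eventually_ge_atTop 0).mono fun y hy => self_le_Gfun hy) tendsto_id
  have hb : Tendsto Gfun atBot atBot :=
    tendsto_atBot_mono' _ ((eventually_le_atBot 0).mono fun y hy => Gfun_le_self hy) tendsto_id
  exact Continuous.surjective hc ht hb

noncomputable def Giso : ℝ ≃o ℝ := StrictMono.orderIsoOfSurjective Gfun Gfun_strictMono Gfun_surj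

noncomputable def ffun : ℝ → ℝ := fun t => Giso.symm t

lemma G_ffun (t : ℝ) : Gfun (ffun t) = t := Giso.apply_symm_apply t

lemma ffun_zero : ffun 0 = 0 := by
  have h : Giso 0 = 0 := Gfun_zero
  have := congrArg Giso.symm h
  rw [Giso.symm_apply_apply] at this
  exact this.symm

lemma ffun_continuous : Continuous ffun := by
  have : Continuous (Giso.symm : ℝ → ℝ) := OrderIso.continuous _
  exact this

lemma ffun_hasDerivAt (t : ℝ) :
    HasDerivAt ffun (Real.sqrt (1 + 2 * (ffun t) ^ 2))⁻¹ t := by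
  exact HasDerivAt.of_local_left_inverse (ffun_continuous.continuousAt)
    (Gfun_hasDerivAt (ffun t)) (s_pos (ffun t)).ne'
    (Eventually.of_forall fun y => G_ffun y)

noncomputable def Gph : OpenPartialHomeomorph ℝ ℝ := Giso.toHomeomorph.toOpenPartialHomeomorph

open scoped ContDiff in
lemma ffun_contDiffAt (t : ℝ) : ContDiffAt ℝ ω ffun t := by
  have hsymm : (Gph.symm : ℝ → ℝ) = ffun := rfl
  have hcoe : (Gph : ℝ → ℝ) = Gfun := rfl
  have h := Gph.contDiffAt_symm_deriv (f₀' := Real.sqrt (1 + 2 * (ffun t) ^ 2))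
    (s_pos (ffun t)).ne' (by simp [Gph, Homeomorph.toOpenPartialHomeomorph])
    (by rw [hcoe, hsymm]; exact Gfun_hasDerivAt (ffun t))
    (by rw [hcoe, hsymm]; exact Gfun_contDiffAt (ffun t))
  rwa [hsymm] at h


/-- There exists a function `f : ℝ → ℝ` with `f 0 = 0`, differentiable everywhere with
`f' t = (1 + 2 f(t)²)^(-1/2)`, and infinitely differentiable on `ℝ`. -/
theorem exists_dual_change_of_variables :
    ∃ f : ℝ → ℝ, f 0 = 0 ∧
      (∀ t : ℝ, HasDerivAt f ((1 + 2 * (f t) ^ 2) ^ (-(1 / 2 : ℝ))) t) ∧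
      ContDiff ℝ (⊤ : ℕ∞) f := by
  refine ⟨ffun, ffun_zero, fun t => ?_, contDiff_iff_contDiffAt.2 fun t => (ffun_contDiffAt t).of_le le_top⟩
  have h := ffun_hasDerivAt t
  rwa [show ((1 + 2 * (ffun t) ^ 2) ^ (-(1 / 2 : ℝ)))
      = (Real.sqrt (1 + 2 * (ffun t) ^ 2))⁻¹ by
    rw [Real.rpow_neg (u_pos (ffun t)).le, Real.sqrt_eq_rpow]]
end

section
/- Let f : ℝ → ℝ satisfy f(0) = 0 and be differentiable everywhere with f'(t) = (1 + 2 f(t)²)^{-1/2} for all t ∈ ℝ. Then |f(t)| ≤ 2^{1/4} |t|^{1/2} for all t ∈ ℝ. -/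
/-!
Since `(f²)' = 2 f (1 + 2 f²)^(-1/2)` and `4 f² ≤ 2 (1 + 2 f²)`, the function `f²` is
`√2`-Lipschitz; with `f 0 = 0` this gives `f t ² ≤ √2 |t|`, and taking square roots gives the bound.
-/

open Real

lemma abs_sq_sub_sq_le_of_hasDerivAt {f f' : ℝ → ℝ} {C : ℝ}
    (hf : ∀ t, HasDerivAt f (f' t) t) (hC : ∀ t, |2 * f t * f' t| ≤ C) (s t : ℝ) :
    |f t ^ 2 - f s ^ 2| ≤ C * |t - s| := by
  have hsq : ∀ u, HasDerivAt (fun u => f u ^ 2) (2 * f u * f' u) u := fun u => by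
    simpa using (hf u).fun_pow 2
  exact convex_univ.norm_image_sub_le_of_norm_hasDerivWithin_le
    (fun u _ => (hsq u).hasDerivWithinAt) (fun u _ => hC u) (Set.mem_univ s) (Set.mem_univ t)

lemma abs_two_mul_mul_one_add_two_mul_sq_rpow_neg_half_le (x : ℝ) :
    |2 * x * (1 + 2 * x ^ 2) ^ (-(1 / 2 : ℝ))| ≤ √2 := by
  have hpos : 0 < √(1 + 2 * x ^ 2) := sqrt_pos.2 (by positivity)
  have hsq : 2 * |x| ≤ √2 * √(1 + 2 * x ^ 2) := by
    rw [← sqrt_mul zero_le_two, ← sqrt_sq (by positivity : 0 ≤ 2 * |x|)]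
    exact sqrt_le_sqrt (by nlinarith [sq_abs x])
  rw [rpow_neg (by positivity), ← sqrt_eq_rpow, abs_mul, abs_mul, abs_two, abs_inv,
    abs_of_pos hpos, ← div_eq_mul_inv, div_le_iff₀ hpos]
  exact hsq

lemma sqrt_sqrt_two_mul_abs (t : ℝ) :
    √(√2 * |t|) = (2 : ℝ) ^ (1 / 4 : ℝ) * |t| ^ (1 / 2 : ℝ) := by
  rw [sqrt_mul (sqrt_nonneg 2), sqrt_eq_rpow, sqrt_eq_rpow, sqrt_eq_rpow,
    ← rpow_mul zero_le_two]
  norm_num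

/-- Lemma 2.1 (3): `|f t| ≤ 2^(1/4) |t|^(1/2)` for all `t`. -/
theorem dual_change_of_variables_abs_le_sqrt (f : ℝ → ℝ)
    (hf0 : f 0 = 0)
    (hf : ∀ t : ℝ, HasDerivAt f ((1 + 2 * (f t) ^ 2) ^ (-(1 / 2 : ℝ))) t) :
    ∀ t : ℝ, |f t| ≤ (2 : ℝ) ^ (1 / 4 : ℝ) * |t| ^ (1 / 2 : ℝ) := by
  intro t
  have hsq : f t ^ 2 ≤ √2 * |t| := by
    simpa [hf0] using abs_sq_sub_sq_le_of_hasDerivAt hf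
      (fun s => abs_two_mul_mul_one_add_two_mul_sq_rpow_neg_half_le (f s)) 0 t
  rw [← sqrt_sqrt_two_mul_abs, ← sqrt_sq_eq_abs]
  exact sqrt_le_sqrt hsq
end

section
/- Let f : ℝ → ℝ satisfy f(0) = 0 and be differentiable everywhere with f'(t) = (1 + 2 f(t)²)^{-1/2} for all t ∈ ℝ. Then for every t > 0 one has (1/2) f(t) ≤ t · (1 + 2 f(t)²)^{-1/2} ≤ f(t), i.e., (1/2) f(t) ≤ t f'(t) ≤ f(t). -/
open Real

/-!
Since `f' = (1 + 2 f²)^(-1/2)`, the inverse of `f` is `G(y) = ∫₀^y √(1 + 2s²) ds`, which is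
explicit: `G(y) = (y √(1 + 2y²) + arsinh(√2 y) / √2) / 2`. Hence `t = G(f t)` and
`t f'(t) = G(f t) / √(1 + 2 f(t)²) = f(t) / 2 + arsinh(√2 f(t)) / (2 √2 √(1 + 2 f(t)²))`.
For `t > 0` the last term lies between `0` and `f(t) / 2`, because `0 ≤ arsinh x ≤ x` for `x ≥ 0`.
-/

noncomputable def dualChangeInv (y : ℝ) : ℝ :=
  (y * √(1 + 2 * y ^ 2) + arsinh (√2 * y) / √2) / 2

theorem hasDerivAt_dualChangeInv (y : ℝ) :
    HasDerivAt dualChangeInv (√(1 + 2 * y ^ 2)) y := by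
  have hs : 0 < 1 + 2 * y ^ 2 := by positivity
  have hsqrt :
      HasDerivAt (fun y => √(1 + 2 * y ^ 2)) (2 * (2 * y) / (2 * √(1 + 2 * y ^ 2))) y := by
    convert (((hasDerivAt_pow 2 y).const_mul 2).const_add 1).sqrt hs.ne' using 1
    ring
  have harsinh := ((hasDerivAt_id' y).const_mul √2).arsinh
  refine ((((hasDerivAt_id' y).mul hsqrt).add (harsinh.div_const √2)).div_const 2).congr_deriv ?_
  have hsq : (√2 * y) ^ 2 = 2 * y ^ 2 := by simp [mul_pow]
  rw [hsq]
  have hs' := sq_sqrt hs.le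
  have hs_ne : √(1 + 2 * y ^ 2) ≠ 0 := (sqrt_pos.2 hs).ne'
  have h2_ne : √2 ≠ 0 := by positivity
  simp only [smul_eq_mul, mul_one]
  field_simp
  linear_combination -hs'

theorem rpow_neg_half_eq_inv_sqrt {x : ℝ} (hx : 0 ≤ x) : x ^ (-(1 / 2 : ℝ)) = (√x)⁻¹ := by
  rw [rpow_neg hx, sqrt_eq_rpow]

theorem dualChangeInv_comp_eq_self (f : ℝ → ℝ) (hf0 : f 0 = 0)
    (hf : ∀ t : ℝ, HasDerivAt f ((1 + 2 * (f t) ^ 2) ^ (-(1 / 2 : ℝ))) t) (t : ℝ) :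
    dualChangeInv (f t) = t := by
  have hderiv : ∀ t, HasDerivAt (fun t => dualChangeInv (f t) - t) 0 t := fun t => by
    have hs : 0 < √(1 + 2 * f t ^ 2) := sqrt_pos.2 (by positivity)
    refine (((hasDerivAt_dualChangeInv (f t)).comp t (hf t)).sub (hasDerivAt_id' t)).congr_deriv ?_
    rw [rpow_neg_half_eq_inv_sqrt (by positivity), mul_inv_cancel₀ hs.ne', sub_self]
  have hconst := is_const_of_deriv_eq_zero (fun t => (hderiv t).differentiableAt)
    (fun t => (hderiv t).deriv) t 0
  simpa [hf0, dualChangeInv, sub_eq_zero] using hconst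

theorem dualChangeInv_mul_inv_sqrt (y : ℝ) :
    dualChangeInv y * (√(1 + 2 * y ^ 2))⁻¹
      = y / 2 + arsinh (√2 * y) / (2 * √2 * √(1 + 2 * y ^ 2)) := by
  have hs_ne : √(1 + 2 * y ^ 2) ≠ 0 := (sqrt_pos.2 (by positivity)).ne'
  unfold dualChangeInv
  field_simp

theorem half_mul_le_dualChangeInv_mul_inv_sqrt {y : ℝ} (hy : 0 ≤ y) :
    1 / 2 * y ≤ dualChangeInv y * (√(1 + 2 * y ^ 2))⁻¹ := by
  rw [dualChangeInv_mul_inv_sqrt]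
  have harsinh : 0 ≤ arsinh (√2 * y) := arsinh_nonneg_iff.2 (by positivity)
  have hrest : 0 ≤ arsinh (√2 * y) / (2 * √2 * √(1 + 2 * y ^ 2)) := by positivity
  linarith

theorem dualChangeInv_mul_inv_sqrt_le {y : ℝ} (hy : 0 ≤ y) :
    dualChangeInv y * (√(1 + 2 * y ^ 2))⁻¹ ≤ y := by
  rw [dualChangeInv_mul_inv_sqrt]
  have harsinh : arsinh (√2 * y) ≤ √2 * y := by
    simpa using arsinh_le_arsinh.2 (self_le_sinh_iff.2 (by positivity : 0 ≤ √2 * y))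
  have hs : 1 ≤ √(1 + 2 * y ^ 2) := one_le_sqrt.2 (by nlinarith)
  have hrest : arsinh (√2 * y) / (2 * √2 * √(1 + 2 * y ^ 2)) ≤ y / 2 := by
    rw [div_le_div_iff₀ (by positivity) (by norm_num)]
    nlinarith [mul_nonneg (mul_nonneg (sqrt_nonneg 2) hy) (sub_nonneg.2 hs)]
  linarith

/-- Lemma 2.1 (4): for `t > 0`, `(1/2) f(t) ≤ t f'(t) ≤ f(t)`,
where `f'(t) = (1 + 2 f(t)²)^(-1/2)`. -/
theorem dual_change_of_variables_tfprime (f : ℝ → ℝ)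
    (hf0 : f 0 = 0)
    (hf : ∀ t : ℝ, HasDerivAt f ((1 + 2 * (f t) ^ 2) ^ (-(1 / 2 : ℝ))) t) :
    ∀ t : ℝ, 0 < t →
      (1 / 2) * f t ≤ t * (1 + 2 * (f t) ^ 2) ^ (-(1 / 2 : ℝ)) ∧
      t * (1 + 2 * (f t) ^ 2) ^ (-(1 / 2 : ℝ)) ≤ f t := by
  intro t ht
  have hft : 0 < f t := hf0 ▸ strictMono_of_hasDerivAt_pos hf (fun _ => by positivity) ht
  have hlower := half_mul_le_dualChangeInv_mul_inv_sqrt hft.le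
  have hupper := dualChangeInv_mul_inv_sqrt_le hft.le
  rw [dualChangeInv_comp_eq_self f hf0 hf t] at hlower hupper
  rw [rpow_neg_half_eq_inv_sqrt (by positivity)]
  exact ⟨hlower, hupper⟩
end

section
/- Let f : ℝ → ℝ satisfy f(0) = 0 and be differentiable everywhere with f'(t) = (1 + 2 f(t)²)^{-1/2} for all t ∈ ℝ. Then there exists a constant C > 0 such that |f(t)| ≥ C |t| whenever |t| ≤ 1, and |f(t)| ≥ C |t|^{1/2} whenever |t| ≥ 1. -/
/-- Lemma 2.1 (6): there is `C > 0` with `|f t| ≥ C |t|` for `|t| ≤ 1`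
and `|f t| ≥ C |t|^(1/2)` for `|t| ≥ 1`. -/
theorem dual_change_of_variables_lower_bound (f : ℝ → ℝ)
    (hf0 : f 0 = 0)
    (hf : ∀ t : ℝ, HasDerivAt f ((1 + 2 * (f t) ^ 2) ^ (-(1 / 2 : ℝ))) t) :
    ∃ C : ℝ, 0 < C ∧
      (∀ t : ℝ, |t| ≤ 1 → C * |t| ≤ |f t|) ∧
      (∀ t : ℝ, 1 ≤ |t| → C * |t| ^ (1 / 2 : ℝ) ≤ |f t|) := by
  set c : ℝ := (Real.sqrt 3)⁻¹ with hc
  have h3 : (0:ℝ) < Real.sqrt 3 := Real.sqrt_pos.2 (by norm_num)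
  have hcpos : 0 < c := inv_pos.2 h3
  have hcsq : c ^ 2 = 1 / 3 := by
    rw [hc, inv_pow, Real.sq_sqrt (by norm_num : (3:ℝ) ≥ 0)]; norm_num
  set d : ℝ → ℝ := fun t => (1 + 2 * (f t) ^ 2) ^ (-(1 / 2 : ℝ)) with hd
  have hb1 : ∀ t, (1:ℝ) ≤ 1 + 2 * f t ^ 2 := fun t => by nlinarith [sq_nonneg (f t)]
  have hdeq : ∀ t, d t = (Real.sqrt (1 + 2 * f t ^ 2))⁻¹ := by
    intro t
    show (1 + 2 * f t ^ 2) ^ (-(1 / 2 : ℝ)) = _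
    rw [Real.rpow_neg (by nlinarith [sq_nonneg (f t)]), ← Real.sqrt_eq_rpow]
  have hdpos : ∀ t, 0 < d t := by
    intro t; rw [hdeq t]
    exact inv_pos.2 (Real.sqrt_pos.2 (by linarith [hb1 t]))
  have hdle1 : ∀ t, d t ≤ 1 := by
    intro t; rw [hdeq t]
    refine inv_le_one_of_one_le₀ ?_
    exact Real.one_le_sqrt.2 (hb1 t)
  -- f is 1-Lipschitz from 0
  have hlip : ∀ t, |f t| ≤ |t| := by
    intro t
    have := Convex.norm_image_sub_le_of_norm_hasDerivWithin_le
      (f := f) (f' := d) (C := 1) (s := Set.univ)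
      (fun x _ => (hf x).hasDerivWithinAt) (fun x _ => by
        rw [Real.norm_eq_abs, abs_of_pos (hdpos x)]; exact hdle1 x)
      convex_univ (Set.mem_univ 0) (Set.mem_univ t)
    simpa [hf0] using this
  have hdge : ∀ t, f t ^ 2 ≤ 1 → c ≤ d t := by
    intro t ht
    rw [hdeq t, hc]
    refine inv_anti₀ (Real.sqrt_pos.2 (by linarith [hb1 t])) ?_
    exact Real.sqrt_le_sqrt (by nlinarith)
  -- monotone f
  have hmono : Monotone f :=
    monotone_of_deriv_nonneg (fun t => (hf t).differentiableAt)
      (fun t => by rw [(hf t).deriv]; exact (hdpos t).le)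
  -- derivative of g x = f x - c * x
  have hg : ∀ x : ℝ, HasDerivAt (fun x => f x - c * x) (d x - c) x := by
    intro x
    have h1 : HasDerivAt (fun x : ℝ => c * x) c x := by
      simpa using (hasDerivAt_id x).const_mul c
    exact (hf x).sub h1
  have hgdiff : Differentiable ℝ (fun x => f x - c * x) :=
    fun x => (hg x).differentiableAt
  have hgmono : MonotoneOn (fun x => f x - c * x) (Set.Icc (-1:ℝ) 1) := by
    apply monotoneOn_of_hasDerivWithinAt_nonneg (convex_Icc _ _)
      hgdiff.continuous.continuousOn
      (fun x _ => (hg x).hasDerivWithinAt)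
    intro x hx
    rw [interior_Icc] at hx
    have hx1 : |x| ≤ 1 := abs_le.2 ⟨hx.1.le, hx.2.le⟩
    have hfx : f x ^ 2 ≤ 1 := by
      have := (hlip x).trans hx1
      calc f x ^ 2 = |f x| ^ 2 := (sq_abs _).symm
        _ ≤ 1 := by nlinarith [abs_nonneg (f x)]
    linarith [hdge x hfx]
  have hlin_pos : ∀ t ∈ Set.Icc (0:ℝ) 1, c * t ≤ f t := by
    intro t ht
    have := hgmono (Set.mem_Icc.2 ⟨by norm_num, by norm_num⟩)
      (Set.mem_Icc.2 ⟨by linarith [ht.1], ht.2⟩) ht.1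
    simp only [hf0] at this
    linarith
  have hlin_neg : ∀ t ∈ Set.Icc (-1:ℝ) 0, f t ≤ c * t := by
    intro t ht
    have := hgmono (Set.mem_Icc.2 ⟨ht.1, by linarith [ht.2]⟩)
      (Set.mem_Icc.2 ⟨by norm_num, by norm_num⟩) ht.2
    simp only [hf0] at this
    linarith
  have hf1 : c ≤ f 1 := by simpa using hlin_pos 1 (by norm_num)
  have hfm1 : f (-1) ≤ -c := by
    have := hlin_neg (-1) (by norm_num); linarith
  -- key inequality for the sqrt regime
  have hkey : ∀ x : ℝ, 1/3 ≤ f x ^ 2 → 1/3 ≤ 2 * |f x| * d x := by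
    intro x hx
    have hfx : 0 < |f x| := by
      rcases eq_or_ne (f x) 0 with h | h
      · rw [h] at hx; norm_num at hx
      · exact abs_pos.2 h
    have hax : 1/3 ≤ |f x| ^ 2 := by rw [sq_abs]; exact hx
    have hsb : Real.sqrt (1 + 2 * f x ^ 2) ≤ 6 * |f x| := by
      rw [show 6 * |f x| = Real.sqrt ((6 * |f x|) ^ 2) from
        (Real.sqrt_sq (by positivity)).symm]
      refine Real.sqrt_le_sqrt ?_
      have : f x ^ 2 = |f x| ^ 2 := (sq_abs _).symm
      nlinarith
    have hbpos : 0 < Real.sqrt (1 + 2 * f x ^ 2) :=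
      Real.sqrt_pos.2 (by linarith [hb1 x])
    rw [hdeq x]
    calc (1:ℝ)/3 = 2 * |f x| * (6 * |f x|)⁻¹ := by field_simp; ring
      _ ≤ 2 * |f x| * (Real.sqrt (1 + 2 * f x ^ 2))⁻¹ :=
        mul_le_mul_of_nonneg_left (inv_anti₀ hbpos hsb) (by positivity)
  -- derivative of quadratic comparison functions
  have hh : ∀ x : ℝ, HasDerivAt (fun x => f x ^ 2 - x / 3) (2 * f x * d x - 1/3) x := by
    intro x
    have h0 : HasDerivAt (fun x => f x ^ 2) (↑(2:ℕ) * f x ^ (2-1) * d x) x := (hf x).pow 2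
    have h1 : HasDerivAt (fun x => f x ^ 2) (2 * f x * d x) x := by
      convert h0 using 1; push_cast; ring
    have h2 : HasDerivAt (fun x : ℝ => x / 3) (1/3) x := by
      simpa using (hasDerivAt_id x).div_const 3
    exact h1.sub h2
  have hh2 : ∀ x : ℝ, HasDerivAt (fun x => f x ^ 2 + x / 3) (2 * f x * d x + 1/3) x := by
    intro x
    have h0 : HasDerivAt (fun x => f x ^ 2) (↑(2:ℕ) * f x ^ (2-1) * d x) x := (hf x).pow 2
    have h1 : HasDerivAt (fun x => f x ^ 2) (2 * f x * d x) x := by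
      convert h0 using 1; push_cast; ring
    have h2 : HasDerivAt (fun x : ℝ => x / 3) (1/3) x := by
      simpa using (hasDerivAt_id x).div_const 3
    exact h1.add h2
  have hsq_pos : ∀ t : ℝ, 1 ≤ t → t / 3 ≤ f t ^ 2 := by
    intro t ht
    have hmonoh : MonotoneOn (fun x => f x ^ 2 - x / 3) (Set.Ici (1:ℝ)) := by
      have hdiff : Differentiable ℝ (fun x => f x ^ 2 - x / 3) :=
        fun x => (hh x).differentiableAt
      apply monotoneOn_of_hasDerivWithinAt_nonneg (convex_Ici _)
        hdiff.continuous.continuousOn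
        (fun x _ => (hh x).hasDerivWithinAt)
      intro x hx
      rw [interior_Ici] at hx
      have hfx : c ≤ f x := hf1.trans (hmono hx.le)
      have hfx2 : 1/3 ≤ f x ^ 2 := by nlinarith
      have habs : |f x| = f x := abs_of_pos (hcpos.trans_le hfx)
      have := hkey x hfx2
      rw [habs] at this
      linarith
    have h1 : (0:ℝ) ≤ f 1 ^ 2 - 1 / 3 := by nlinarith
    have := hmonoh (Set.mem_Ici.2 le_rfl) (Set.mem_Ici.2 ht) ht
    simp only at this
    linarith
  have hsq_neg : ∀ t : ℝ, t ≤ -1 → -t / 3 ≤ f t ^ 2 := by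
    intro t ht
    have hmonoh : AntitoneOn (fun x => f x ^ 2 + x / 3) (Set.Iic (-1:ℝ)) := by
      have hdiff : Differentiable ℝ (fun x => f x ^ 2 + x / 3) :=
        fun x => (hh2 x).differentiableAt
      apply antitoneOn_of_hasDerivWithinAt_nonpos (convex_Iic _)
        hdiff.continuous.continuousOn
        (fun x _ => (hh2 x).hasDerivWithinAt)
      intro x hx
      rw [interior_Iic] at hx
      have hfx : f x ≤ -c := (hmono hx.le).trans hfm1
      have hfx2 : 1/3 ≤ f x ^ 2 := by nlinarith
      have habs : |f x| = -f x := abs_of_neg (by linarith)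
      have := hkey x hfx2
      rw [habs] at this
      linarith
    have h1 : (0:ℝ) ≤ f (-1) ^ 2 - 1 / 3 := by nlinarith
    have := hmonoh (Set.mem_Iic.2 ht) (Set.mem_Iic.2 le_rfl) ht
    simp only at this
    linarith
  refine ⟨c, hcpos, ?_, ?_⟩
  · intro t ht
    rcases le_total 0 t with h | h
    · rw [abs_of_nonneg h] at ht ⊢
      have := hlin_pos t ⟨h, ht⟩
      linarith [le_abs_self (f t)]
    · rw [abs_of_nonpos h] at ht ⊢
      have := hlin_neg t ⟨by linarith, h⟩
      have h2 := neg_abs_le (f t)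
      nlinarith
  · intro t ht
    rcases le_abs.mp ht with h | h
    · have ht0 : (0:ℝ) ≤ t := by linarith
      have hsq := hsq_pos t h
      calc c * |t| ^ (1/2:ℝ) = Real.sqrt (3⁻¹ * t) := by
            rw [abs_of_nonneg ht0, ← Real.sqrt_eq_rpow, hc, ← Real.sqrt_inv,
              ← Real.sqrt_mul (by norm_num)]
        _ ≤ Real.sqrt (f t ^ 2) := Real.sqrt_le_sqrt (by linarith)
        _ = |f t| := Real.sqrt_sq_eq_abs _
    · have ht1 : t ≤ -1 := by linarith
      have hsq := hsq_neg t ht1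
      calc c * |t| ^ (1/2:ℝ) = Real.sqrt (3⁻¹ * (-t)) := by
            rw [abs_of_nonpos (by linarith), ← Real.sqrt_eq_rpow, hc, ← Real.sqrt_inv,
              ← Real.sqrt_mul (by norm_num)]
        _ ≤ Real.sqrt (f t ^ 2) := Real.sqrt_le_sqrt (by linarith)
        _ = |f t| := Real.sqrt_sq_eq_abs _
end

section
/- Let N ≥ 3 be an integer, R > 0, and let ξ : ℝ^N → ℝ be a smooth function with 0 ≤ ξ ≤ 1, ξ ≡ 1 on the closed ball of radius R centered at 0, and ξ ≡ 0 outside the ball of radius 2R centered at 0. For ε > 0 define w_ε(x) = (N(N-2)ε)^{(N-2)/8} / (ε + ‖x‖²)^{(N-2)/4} and v_ε = ξ·w_ε. Then, as ε → 0⁺, the difference ∫_{ℝ^N} ‖∇(v_ε²)(x)‖² dx − ∫_{ℝ^N} ‖∇(w_ε²)(x)‖² dx is O(ε^{(N-2)/2}), i.e., there exist constants C > 0 and ε₀ > 0 such that this difference has absolute value at most C ε^{(N-2)/2} for all 0 < ε < ε₀. -/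
open MeasureTheory Metric Set Filter

private lemma norm_gradient_eq_norm_fderiv {F : Type*} [NormedAddCommGroup F]
    [InnerProductSpace ℝ F] [CompleteSpace F] (f : F → ℝ) (x : F) :
    ‖gradient f x‖ = ‖fderiv ℝ f x‖ := by
  unfold gradient
  exact LinearIsometryEquiv.norm_map _ _

set_option maxHeartbeats 4000000 in
set_option synthInstance.maxHeartbeats 1000000 in
/-- Estimate (4.10): with `v_ε = ξ w_ε` the truncated square-root instanton,
`∫ |∇(v_ε²)|² − ∫ |∇(w_ε²)|² = O(ε^((N-2)/2))` as `ε → 0⁺`. -/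
theorem truncated_instanton_gradient_sq_estimate (N : ℕ) (hN : 3 ≤ N) (R : ℝ) (hR : 0 < R)
    (ξ : EuclideanSpace ℝ (Fin N) → ℝ) (hξ : ContDiff ℝ (⊤ : ℕ∞) ξ)
    (hξ01 : ∀ x, 0 ≤ ξ x ∧ ξ x ≤ 1)
    (hξ1 : ∀ x : EuclideanSpace ℝ (Fin N), ‖x‖ ≤ R → ξ x = 1)
    (hξ0 : ∀ x : EuclideanSpace ℝ (Fin N), 2 * R ≤ ‖x‖ → ξ x = 0)
    (w v : ℝ → EuclideanSpace ℝ (Fin N) → ℝ)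
    (hw : ∀ e : ℝ, 0 < e → ∀ x : EuclideanSpace ℝ (Fin N),
      w e x = ((N : ℝ) * ((N : ℝ) - 2) * e) ^ (((N : ℝ) - 2) / 8) /
        (e + ‖x‖ ^ 2) ^ (((N : ℝ) - 2) / 4))
    (hv : ∀ e : ℝ, ∀ x : EuclideanSpace ℝ (Fin N), v e x = ξ x * w e x) :
    ∃ C > (0 : ℝ), ∃ ε₀ > (0 : ℝ), ∀ ε : ℝ, 0 < ε → ε < ε₀ →
      |(∫ x : EuclideanSpace ℝ (Fin N), ‖gradient (fun y => (v ε y) ^ 2) x‖ ^ 2) -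
        (∫ x : EuclideanSpace ℝ (Fin N), ‖gradient (fun y => (w ε y) ^ 2) x‖ ^ 2)| ≤
      C * ε ^ (((N : ℝ) - 2) / 2) := by
  have hN3 : (3 : ℝ) ≤ (N : ℝ) := by exact_mod_cast hN
  set q : ℝ := ((N : ℝ) - 2) / 2 with hq_def
  have hq : 0 < q := by rw [hq_def]; linarith
  have hqN : -q - 1 + (-q - 1) = -(N : ℝ) := by rw [hq_def]; ring
  -- the cutoff squared and its derivative
  set ξsq : EuclideanSpace ℝ (Fin N) → ℝ := fun x => ξ x ^ 2 with hξsq_def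
  have hξsqc : ContDiff ℝ (⊤ : ℕ∞) ξsq := hξ.pow 2
  set Eξ : EuclideanSpace ℝ (Fin N) → (EuclideanSpace ℝ (Fin N) →L[ℝ] ℝ) :=
    fun x => fderiv ℝ ξsq x with hEξ_def
  have hEξc : Continuous Eξ := hξsqc.continuous_fderiv (by simp)
  have hEξ0 : ∀ x : EuclideanSpace ℝ (Fin N), 2 * R < ‖x‖ → Eξ x = 0 := by
    intro x hx
    have hopen : IsOpen {y : EuclideanSpace ℝ (Fin N) | 2 * R < ‖y‖} :=
      isOpen_lt continuous_const continuous_norm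
    have hev : ξsq =ᶠ[nhds x] fun _ => (0 : ℝ) := by
      filter_upwards [hopen.mem_nhds hx] with y hy
      simp [hξsq_def, hξ0 y hy.le]
    have := Filter.EventuallyEq.fderiv_eq (𝕜 := ℝ) hev
    rw [fderiv_const_apply] at this
    simpa [hEξ_def] using this
  -- bound on the derivative of the cutoff squared
  obtain ⟨M, hM⟩ := (isCompact_closedBall (0 : EuclideanSpace ℝ (Fin N)) (2 * R)).exists_bound_of_continuousOn hEξc.continuousOn
  set M' : ℝ := max M 0 with hM'_def
  have hM'0 : 0 ≤ M' := le_max_right _ _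
  have hM' : ∀ x ∈ closedBall (0 : EuclideanSpace ℝ (Fin N)) (2 * R), ‖Eξ x‖ ≤ M' :=
    fun x hx => le_trans (hM x hx) (le_max_left _ _)
  -- integrable majorant
  have hIr : Integrable (fun x : EuclideanSpace ℝ (Fin N) =>
      (1 + ‖x‖) ^ (-(2 * (N : ℝ) - 2))) volume := by
    apply integrable_one_add_norm
    rw [finrank_euclideanSpace_fin]
    linarith
  set c₁ : ℝ := 12 * q ^ 2 * (1 + 1 / R) ^ (2 * (N : ℝ) - 2) with hc₁_def
  have hc₁0 : 0 ≤ c₁ := by positivity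
  set c₂ : ℝ := 2 * M' ^ 2 * ((R ^ 2) ^ (-q)) ^ 2 with hc₂_def
  have hc₂0 : 0 ≤ c₂ := by positivity
  set B : EuclideanSpace ℝ (Fin N) → ℝ := fun x =>
    c₁ * (1 + ‖x‖) ^ (-(2 * (N : ℝ) - 2)) +
      Set.indicator (closedBall (0 : EuclideanSpace ℝ (Fin N)) (2 * R)) (fun _ => c₂) x
    with hB_def
  have hBnn : ∀ x, 0 ≤ B x := by
    intro x
    apply add_nonneg
    · positivity
    · exact Set.indicator_nonneg (fun _ _ => hc₂0) x
  have hBint : Integrable B := by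
    apply (hIr.const_mul c₁).add
    rw [integrable_indicator_iff measurableSet_closedBall]
    exact integrableOn_const measure_closedBall_lt_top.ne
  set K : ℝ := ∫ x, B x with hK_def
  have hK : 0 ≤ K := integral_nonneg hBnn
  have hNN2 : 0 < (N : ℝ) * ((N : ℝ) - 2) := by nlinarith
  refine ⟨((N : ℝ) * ((N : ℝ) - 2)) ^ q * (K + 1),
    by positivity, 1, one_pos, ?_⟩
  intro ε hε hε1
  set cN : ℝ := (N : ℝ) * ((N : ℝ) - 2) * ε with hcN_def
  have hcN : 0 < cN := mul_pos hNN2 hε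
  set A : ℝ := cN ^ (((N : ℝ) - 2) / 4) with hA_def
  have hA : 0 < A := Real.rpow_pos_of_pos hcN _
  set p : EuclideanSpace ℝ (Fin N) → ℝ := fun x => ε + ‖x‖ ^ 2 with hp_def
  have hp : ∀ x, 0 < p x := fun x => add_pos_of_pos_of_nonneg hε (by positivity)
  have hpε : ∀ x, ε ≤ p x := fun x => by
    simp only [hp_def]; nlinarith [sq_nonneg ‖x‖]
  have hpx : ∀ x : EuclideanSpace ℝ (Fin N), ‖x‖ ^ 2 ≤ p x := fun x => by
    simp only [hp_def]; linarith
  set W : EuclideanSpace ℝ (Fin N) → ℝ := fun x => A * p x ^ (-q) with hW_def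
  set DW : EuclideanSpace ℝ (Fin N) → (EuclideanSpace ℝ (Fin N) →L[ℝ] ℝ) :=
    fun x => (A * (-q * p x ^ (-q - 1) * 2)) • innerSL ℝ x with hDW_def
  have hderivp : ∀ x : EuclideanSpace ℝ (Fin N), HasFDerivAt p ((2:ℝ) • innerSL ℝ x) x := by
    intro x
    have h := (hasStrictFDerivAt_norm_sq x).hasFDerivAt
    rw [← Nat.cast_smul_eq_nsmul ℝ 2] at h
    exact h.const_add ε
  have hDWd : ∀ x, HasFDerivAt W (DW x) x := by
    intro x
    have h3 : HasDerivAt (fun t : ℝ => t ^ (-q)) (-q * p x ^ (-q - 1)) (p x) :=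
      Real.hasDerivAt_rpow_const (Or.inl (hp x).ne')
    have h5 := (h3.comp_hasFDerivAt x (hderivp x)).const_mul A
    refine h5.congr_fderiv ?_
    simp only [hDW_def]
    rw [smul_smul, smul_smul]
    congr 1
    ring
  have hrpow_nonneg : ∀ (x : EuclideanSpace ℝ (Fin N)) (r : ℝ), 0 ≤ p x ^ r :=
    fun x r => Real.rpow_nonneg (hp x).le r
  have hnDW : ∀ x, ‖DW x‖ = 2 * A * q * p x ^ (-q - 1) * ‖x‖ := by
    intro x
    simp only [hDW_def]
    rw [norm_smul (A * (-q * p x ^ (-q - 1) * 2)) (innerSL ℝ x), innerSL_apply_norm, Real.norm_eq_abs]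
    have h : A * (-q * p x ^ (-q - 1) * 2) = -(2 * A * q * p x ^ (-q - 1)) := by ring
    rw [h, abs_neg,
      abs_of_nonneg (mul_nonneg (mul_nonneg (mul_nonneg two_pos.le hA.le) hq.le)
        (hrpow_nonneg x _))]
  have hWw : ∀ x, w ε x ^ 2 = W x := by
    intro x
    rw [hw ε hε x, div_pow]
    have hexp1 : (((N:ℝ)-2)/8) * ((2:ℕ):ℝ) = ((N:ℝ)-2)/4 := by push_cast; ring
    have hexp2 : (((N:ℝ)-2)/4) * ((2:ℕ):ℝ) = q := by rw [hq_def]; push_cast; ring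
    have h1 : (cN ^ (((N:ℝ)-2)/8)) ^ (2:ℕ) = A := by
      rw [← Real.rpow_natCast (cN ^ (((N:ℝ)-2)/8)) 2, ← Real.rpow_mul hcN.le, hexp1, hA_def]
    have h2 : ((ε + ‖x‖^2) ^ (((N:ℝ)-2)/4)) ^ (2:ℕ) = p x ^ q := by
      rw [← Real.rpow_natCast ((ε + ‖x‖^2) ^ (((N:ℝ)-2)/4)) 2,
        ← Real.rpow_mul (hp x).le, hexp2]
    rw [h1, h2]
    simp only [hW_def]
    rw [Real.rpow_neg (hp x).le, div_eq_mul_inv]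
  set V : EuclideanSpace ℝ (Fin N) → ℝ := fun x => ξsq x * W x with hV_def
  set DV : EuclideanSpace ℝ (Fin N) → (EuclideanSpace ℝ (Fin N) →L[ℝ] ℝ) :=
    fun x => ξsq x • DW x + W x • Eξ x with hDV_def
  have hDVd : ∀ x, HasFDerivAt V (DV x) x := by
    intro x
    have hx1 : HasFDerivAt ξsq (Eξ x) x := (hξsqc.differentiable (by simp) x).hasFDerivAt
    exact hx1.mul (hDWd x)
  -- rewrite the integrands
  have hVfun : (fun y => v ε y ^ 2) = V := by
    funext y
    rw [hv, mul_pow, hWw]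
  have hWfun : (fun y => w ε y ^ 2) = W := funext hWw
  set gV : EuclideanSpace ℝ (Fin N) → ℝ := fun x => ‖DV x‖ ^ 2 with hgV_def
  set gW : EuclideanSpace ℝ (Fin N) → ℝ := fun x => ‖DW x‖ ^ 2 with hgW_def
  have hIV : (fun x : EuclideanSpace ℝ (Fin N) =>
      ‖gradient (fun y => v ε y ^ 2) x‖ ^ 2) = gV := by
    funext x
    rw [norm_gradient_eq_norm_fderiv, hVfun, (hDVd x).fderiv]
  have hIW : (fun x : EuclideanSpace ℝ (Fin N) =>
      ‖gradient (fun y => w ε y ^ 2) x‖ ^ 2) = gW := by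
    funext x
    rw [norm_gradient_eq_norm_fderiv, hWfun, (hDWd x).fderiv]
  -- continuity
  have hpc : Continuous p := by
    simp only [hp_def]; exact continuous_const.add (continuous_norm.pow 2)
  have hppow : ∀ r : ℝ, Continuous fun x => p x ^ r := fun r =>
    hpc.rpow_const fun x => Or.inl (hp x).ne'
  have hDWc : Continuous DW := by
    simp only [hDW_def]
    exact (continuous_const.mul ((continuous_const.mul (hppow _)).mul continuous_const)).smul
      (innerSL ℝ).continuous
  have hWc : Continuous W := by
    simp only [hW_def]; exact continuous_const.mul (hppow _)
  have hDVc : Continuous DV := by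
    simp only [hDV_def]
    exact (hξsqc.continuous.smul hDWc).add (hWc.smul hEξc)
  -- value of gW
  have hgWval : ∀ x, gW x = 4 * A^2 * q^2 * (‖x‖^2 * p x ^ (-(N:ℝ))) := by
    intro x
    simp only [hgW_def]
    rw [hnDW x]
    have hexp3 : (-q-1) * ((2:ℕ):ℝ) = -(N:ℝ) := by rw [hq_def]; push_cast; ring
    have ht : (p x ^ (-q-1))^(2:ℕ) = p x ^ (-(N:ℝ)) := by
      rw [← Real.rpow_natCast (p x ^ (-q-1)) 2, ← Real.rpow_mul (hp x).le, hexp3]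
    have h : (2*A*q*(p x ^ (-q-1))*‖x‖)^2
        = 4*A^2*q^2*(‖x‖^2*((p x ^ (-q-1))^(2:ℕ))) := by ring
    rw [h, ht]
  -- the comparison lemma
  have hcomp : ∀ t c : ℝ, 0 < t → 0 < c → 1 + t ≤ c * t →
      t ^ (-(2*(N:ℝ)-2)) ≤ c ^ (2*(N:ℝ)-2) * (1+t) ^ (-(2*(N:ℝ)-2)) := by
    intro t c ht hc hct
    have ha : (0:ℝ) ≤ 2*(N:ℝ)-2 := by linarith
    have h1t : (0:ℝ) < 1 + t := by linarith
    rw [Real.rpow_neg ht.le, Real.rpow_neg h1t.le]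
    have h2 : (1+t) ^ (2*(N:ℝ)-2) ≤ c ^ (2*(N:ℝ)-2) * t ^ (2*(N:ℝ)-2) := by
      rw [← Real.mul_rpow hc.le ht.le]
      exact Real.rpow_le_rpow h1t.le hct ha
    have hta : 0 < t ^ (2*(N:ℝ)-2) := Real.rpow_pos_of_pos ht _
    have hca : 0 < c ^ (2*(N:ℝ)-2) := Real.rpow_pos_of_pos hc _
    have h1a : 0 < (1+t) ^ (2*(N:ℝ)-2) := Real.rpow_pos_of_pos h1t _
    calc (t ^ (2*(N:ℝ)-2))⁻¹
        = c ^ (2*(N:ℝ)-2) * (c ^ (2*(N:ℝ)-2) * t ^ (2*(N:ℝ)-2))⁻¹ := by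
          rw [mul_inv, ← mul_assoc, mul_inv_cancel₀ hca.ne', one_mul]
      _ ≤ c ^ (2*(N:ℝ)-2) * ((1+t) ^ (2*(N:ℝ)-2))⁻¹ :=
          mul_le_mul_of_nonneg_left (inv_anti₀ h1a h2) hca.le
  have htail : ∀ x : EuclideanSpace ℝ (Fin N), 0 < ‖x‖ →
      ‖x‖^2 * p x ^ (-(N:ℝ)) ≤ ‖x‖ ^ (-(2*(N:ℝ)-2)) := by
    intro x hx0
    have hNneg : -(N:ℝ) ≤ 0 := by linarith
    have h1 : p x ^ (-(N:ℝ)) ≤ (‖x‖^2) ^ (-(N:ℝ)) :=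
      Real.rpow_le_rpow_of_nonpos (by positivity) (hpx x) hNneg
    have h4 : ‖x‖^2 * p x ^ (-(N:ℝ)) ≤ ‖x‖^2 * (‖x‖^2) ^ (-(N:ℝ)) :=
      mul_le_mul_of_nonneg_left h1 (by positivity)
    refine le_trans h4 (le_of_eq ?_)
    have hexp4 : ((2:ℕ):ℝ) + ((2:ℕ):ℝ) * (-(N:ℝ)) = -(2*(N:ℝ)-2) := by push_cast; ring
    rw [← Real.rpow_natCast ‖x‖ 2, ← Real.rpow_mul (norm_nonneg x),
      ← Real.rpow_add hx0, hexp4]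
  -- integrability of gW
  set Cg : ℝ := 4*A^2*q^2 * ε^(-(N:ℝ)) * 2^(2*(N:ℝ)-2) with hCg_def
  have hgWle : ∀ x, gW x ≤ Cg * (1+‖x‖) ^ (-(2*(N:ℝ)-2)) := by
    intro x
    have hNneg : -(N:ℝ) ≤ 0 := by linarith
    have h1x : (0:ℝ) < 1 + ‖x‖ := by positivity
    rw [hgWval x]
    rcases le_total ‖x‖ 1 with hx1 | hx1
    · have hpe : p x ^ (-(N:ℝ)) ≤ ε ^ (-(N:ℝ)) :=
        Real.rpow_le_rpow_of_nonpos hε (hpε x) hNneg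
      have hx2 : ‖x‖^2 * p x ^ (-(N:ℝ)) ≤ 1 * ε ^ (-(N:ℝ)) := by
        apply mul_le_mul (by nlinarith [norm_nonneg x]) hpe (hrpow_nonneg x _) one_pos.le
      have step1 : 4*A^2*q^2 * (‖x‖^2 * p x ^ (-(N:ℝ))) ≤ 4*A^2*q^2 * ε ^ (-(N:ℝ)) := by
        rw [one_mul] at hx2
        exact mul_le_mul_of_nonneg_left hx2 (by positivity)
      have h2pow : (2:ℝ) ^ (2*(N:ℝ)-2) * 2 ^ (-(2*(N:ℝ)-2)) = 1 := by
        rw [← Real.rpow_add two_pos, add_neg_cancel, Real.rpow_zero]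
      have step2 : 4*A^2*q^2 * ε ^ (-(N:ℝ))
          = Cg * 2 ^ (-(2*(N:ℝ)-2)) := by
        rw [hCg_def]
        calc 4*A^2*q^2 * ε ^ (-(N:ℝ))
            = 4*A^2*q^2 * ε ^ (-(N:ℝ)) * ((2:ℝ) ^ (2*(N:ℝ)-2) * 2 ^ (-(2*(N:ℝ)-2))) := by
              rw [h2pow, mul_one]
          _ = 4*A^2*q^2 * ε ^ (-(N:ℝ)) * 2 ^ (2*(N:ℝ)-2) * 2 ^ (-(2*(N:ℝ)-2)) := by ring
      have step3 : Cg * 2 ^ (-(2*(N:ℝ)-2)) ≤ Cg * (1+‖x‖) ^ (-(2*(N:ℝ)-2)) := by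
        apply mul_le_mul_of_nonneg_left
        · exact Real.rpow_le_rpow_of_nonpos h1x (by linarith) (by linarith)
        · rw [hCg_def]; positivity
      linarith
    · have hx0 : (0:ℝ) < ‖x‖ := lt_of_lt_of_le one_pos hx1
      have h2 : ‖x‖ ^ (-(2*(N:ℝ)-2)) ≤ 2 ^ (2*(N:ℝ)-2) * (1+‖x‖) ^ (-(2*(N:ℝ)-2)) :=
        hcomp ‖x‖ 2 hx0 two_pos (by linarith)
      have hε1' : (1:ℝ) ≤ ε ^ (-(N:ℝ)) := by
        rw [← Real.rpow_zero ε]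
        exact Real.rpow_le_rpow_of_exponent_ge hε hε1.le (by linarith)
      have step1 : 4*A^2*q^2 * (‖x‖^2 * p x ^ (-(N:ℝ)))
          ≤ 4*A^2*q^2 * (2 ^ (2*(N:ℝ)-2) * (1+‖x‖) ^ (-(2*(N:ℝ)-2))) :=
        mul_le_mul_of_nonneg_left (le_trans (htail x hx0) h2) (by positivity)
      have step2 : 4*A^2*q^2 * (2 ^ (2*(N:ℝ)-2) * (1+‖x‖) ^ (-(2*(N:ℝ)-2)))
          ≤ Cg * (1+‖x‖) ^ (-(2*(N:ℝ)-2)) := by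
        rw [hCg_def]
        have hnn : (0:ℝ) ≤ (1+‖x‖) ^ (-(2*(N:ℝ)-2)) := Real.rpow_nonneg h1x.le _
        nlinarith [Real.rpow_pos_of_pos two_pos (2*(N:ℝ)-2), sq_nonneg (A*q), hnn,
          mul_nonneg (mul_nonneg (by positivity : (0:ℝ) ≤ 4*A^2*q^2)
            (Real.rpow_pos_of_pos two_pos (2*(N:ℝ)-2)).le) hnn]
      linarith
  have hgWc : Continuous gW := by
    simp only [hgW_def]; exact hDWc.norm.pow 2
  have hgWint : Integrable gW := by
    apply (hIr.const_mul Cg).mono' hgWc.aestronglyMeasurable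
    filter_upwards with x
    rw [Real.norm_eq_abs, abs_of_nonneg (by simp only [hgW_def]; positivity)]
    exact hgWle x
  -- integrability of gV
  have hgVc : Continuous gV := by
    simp only [hgV_def]; exact hDVc.norm.pow 2
  have hgV0 : ∀ x ∉ closedBall (0 : EuclideanSpace ℝ (Fin N)) (2*R), gV x = 0 := by
    intro x hx
    have hx' : 2*R < ‖x‖ := by rwa [mem_closedBall_zero_iff, not_le] at hx
    have h1 : ξsq x = 0 := by simp [hξsq_def, hξ0 x hx'.le]
    simp only [hgV_def, hDV_def, h1, hEξ0 x hx', zero_smul, smul_zero, add_zero, zero_add,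
      norm_zero]
    norm_num
  have hgVint : Integrable gV :=
    hgVc.integrable_of_hasCompactSupport
      (HasCompactSupport.intro (isCompact_closedBall _ _) hgV0)
  -- pointwise bound on the complement of the ball
  have hbound : ∀ x : EuclideanSpace ℝ (Fin N), R ≤ ‖x‖ → |gV x - gW x| ≤ A^2 * B x := by
    intro x hx
    have hx0 : (0:ℝ) < ‖x‖ := lt_of_lt_of_le hR hx
    have h1x : (0:ℝ) < 1 + ‖x‖ := by positivity
    have hct : 1 + ‖x‖ ≤ (1 + 1/R) * ‖x‖ := by
      have h1 : (1:ℝ) ≤ ‖x‖ / R := (one_le_div hR).2 hx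
      have h2 : (1 + 1/R) * ‖x‖ = ‖x‖ + ‖x‖ / R := by ring
      linarith
    have t1 : gW x ≤ 4*A^2*q^2 * ((1+1/R) ^ (2*(N:ℝ)-2) * (1+‖x‖) ^ (-(2*(N:ℝ)-2))) := by
      rw [hgWval x]
      exact mul_le_mul_of_nonneg_left
        (le_trans (htail x hx0) (hcomp ‖x‖ (1+1/R) hx0 (by positivity) hct)) (by positivity)
    have t1' : 3 * gW x ≤ A^2 * (c₁ * (1+‖x‖) ^ (-(2*(N:ℝ)-2))) := by
      have heq : A^2 * (c₁ * (1+‖x‖) ^ (-(2*(N:ℝ)-2)))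
          = 3 * (4*A^2*q^2 * ((1+1/R) ^ (2*(N:ℝ)-2) * (1+‖x‖) ^ (-(2*(N:ℝ)-2)))) := by
        rw [hc₁_def]; ring
      rw [heq]
      linarith
    -- bound for the cutoff term
    have t2 : 2 * (W x * ‖Eξ x‖)^2
        ≤ A^2 * Set.indicator (closedBall (0 : EuclideanSpace ℝ (Fin N)) (2*R))
            (fun _ => c₂) x := by
      rcases le_or_gt ‖x‖ (2*R) with hle | hlt
      · have hmem : x ∈ closedBall (0 : EuclideanSpace ℝ (Fin N)) (2*R) := by
          rwa [mem_closedBall_zero_iff]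
        rw [Set.indicator_of_mem hmem]
        have hWle : W x ≤ A * (R^2) ^ (-q) := by
          simp only [hW_def]
          apply mul_le_mul_of_nonneg_left _ hA.le
          apply Real.rpow_le_rpow_of_nonpos (by positivity) _ (by linarith)
          calc R^2 ≤ ‖x‖^2 := by nlinarith
            _ ≤ p x := hpx x
        have hW0 : 0 ≤ W x := mul_nonneg hA.le (hrpow_nonneg x _)
        have hE : ‖Eξ x‖ ≤ M' := hM' x hmem
        have hprod : W x * ‖Eξ x‖ ≤ A * (R^2) ^ (-q) * M' :=
          mul_le_mul hWle hE (norm_nonneg _) (by positivity)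
        have hc2 : A^2 * c₂ = 2 * (A * (R^2) ^ (-q) * M')^2 := by
          rw [hc₂_def]; ring
        rw [hc2]
        have hnn : 0 ≤ W x * ‖Eξ x‖ := mul_nonneg hW0 (norm_nonneg _)
        nlinarith [hprod, hnn]
      · rw [Set.indicator_of_notMem (by rwa [mem_closedBall_zero_iff, not_le])]
        rw [hEξ0 x hlt]
        simp
    -- comparison of gV and gW
    have hW0 : 0 ≤ W x := mul_nonneg hA.le (hrpow_nonneg x _)
    have hgVle : gV x ≤ 2 * gW x + 2 * (W x * ‖Eξ x‖)^2 := by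
      have hsm1 : ‖ξsq x • DW x‖ ≤ ‖DW x‖ := by
        rw [norm_smul (ξsq x) (DW x), Real.norm_eq_abs]
        have h01 : |ξsq x| ≤ 1 := by
          rw [abs_of_nonneg (by simp only [hξsq_def]; positivity)]
          simp only [hξsq_def]
          nlinarith [(hξ01 x).1, (hξ01 x).2]
        nlinarith [norm_nonneg (DW x), h01, abs_nonneg (ξsq x)]
      have hsm2 : ‖W x • Eξ x‖ = W x * ‖Eξ x‖ := by
        rw [norm_smul (W x) (Eξ x), Real.norm_eq_abs, abs_of_nonneg hW0]
      have h₁ : ‖DV x‖ ≤ ‖DW x‖ + W x * ‖Eξ x‖ := by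
        simp only [hDV_def]
        calc ‖ξsq x • DW x + W x • Eξ x‖ ≤ ‖ξsq x • DW x‖ + ‖W x • Eξ x‖ := norm_add_le _ _
          _ ≤ ‖DW x‖ + W x * ‖Eξ x‖ := by rw [hsm2]; linarith
      simp only [hgV_def, hgW_def]
      have hDVnn : (0:ℝ) ≤ ‖DV x‖ := norm_nonneg _
      nlinarith [h₁, hDVnn, norm_nonneg (DW x), mul_nonneg hW0 (norm_nonneg (Eξ x)),
        sq_nonneg (‖DW x‖ - W x * ‖Eξ x‖)]
    have hgVnn : 0 ≤ gV x := by simp only [hgV_def]; positivity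
    have hgWnn : 0 ≤ gW x := by simp only [hgW_def]; positivity
    have hBx : A^2 * B x = A^2 * (c₁ * (1+‖x‖) ^ (-(2*(N:ℝ)-2)))
        + A^2 * Set.indicator (closedBall (0 : EuclideanSpace ℝ (Fin N)) (2*R))
            (fun _ => c₂) x := by
      simp only [hB_def]; ring
    rw [abs_le]
    constructor
    · have hind : 0 ≤ A^2 * Set.indicator (closedBall (0 : EuclideanSpace ℝ (Fin N)) (2*R))
          (fun _ => c₂) x :=
        mul_nonneg (by positivity) (Set.indicator_nonneg (fun _ _ => hc₂0) x)
      have hc1term : 0 ≤ A^2 * (c₁ * (1+‖x‖) ^ (-(2*(N:ℝ)-2))) := by positivity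
      rw [hBx]
      linarith [hgVle, t1', t2, hgVnn, hind, hc1term]
    · have hind : 0 ≤ A^2 * Set.indicator (closedBall (0 : EuclideanSpace ℝ (Fin N)) (2*R))
          (fun _ => c₂) x :=
        mul_nonneg (by positivity) (Set.indicator_nonneg (fun _ _ => hc₂0) x)
      have hc1term : 0 ≤ A^2 * (c₁ * (1+‖x‖) ^ (-(2*(N:ℝ)-2))) := by positivity
      rw [hBx]
      linarith [hgVle, t1', t2, hgWnn, hind, hc1term]
  -- assembling the estimate
  have e1 : (∫ x : EuclideanSpace ℝ (Fin N), ‖gradient (fun y => (v ε y) ^ 2) x‖ ^ 2)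
      = ∫ x, gV x := congrArg (integral volume) hIV
  have e2 : (∫ x : EuclideanSpace ℝ (Fin N), ‖gradient (fun y => (w ε y) ^ 2) x‖ ^ 2)
      = ∫ x, gW x := congrArg (integral volume) hIW
  rw [e1, e2]
  have hsetz : ∫ x in ball (0:EuclideanSpace ℝ (Fin N)) R, (gV x - gW x) = 0 := by
    apply setIntegral_eq_zero_of_forall_eq_zero
    intro x hx
    have hball : ‖x‖ < R := by rwa [mem_ball_zero_iff] at hx
    have h1 : ξsq x = 1 := by simp [hξsq_def, hξ1 x hball.le]
    have h2 : Eξ x = 0 := by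
      have hev : ξsq =ᶠ[nhds x] fun _ => (1:ℝ) := by
        filter_upwards [isOpen_ball.mem_nhds hx] with y hy
        rw [mem_ball_zero_iff] at hy
        simp [hξsq_def, hξ1 y hy.le]
      have h3 := Filter.EventuallyEq.fderiv_eq (𝕜 := ℝ) hev
      rw [fderiv_const_apply] at h3
      simpa [hEξ_def] using h3
    simp only [hgV_def, hgW_def, hDV_def, h1, h2, one_smul, smul_zero, add_zero, sub_self]
  have hsubI : Integrable (fun x => gV x - gW x) := hgVint.sub hgWint
  have hdiff : (∫ x, gV x) - (∫ x, gW x)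
      = ∫ x in (ball (0:EuclideanSpace ℝ (Fin N)) R)ᶜ, (gV x - gW x) := by
    rw [← integral_sub hgVint hgWint,
      ← integral_add_compl (measurableSet_ball (x := (0:EuclideanSpace ℝ (Fin N))) (ε := R)) hsubI,
      hsetz, zero_add]
  rw [hdiff]
  have hA2 : A^2 = ((N:ℝ)*((N:ℝ)-2))^q * ε^q := by
    rw [hA_def, ← Real.rpow_natCast (cN ^ (((N:ℝ)-2)/4)) 2, ← Real.rpow_mul hcN.le]
    have hqq : (((N:ℝ)-2)/4) * ((2:ℕ):ℝ) = q := by push_cast [hq_def]; ring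
    rw [hqq, hcN_def, Real.mul_rpow (by positivity) hε.le]
  calc |∫ x in (ball (0:EuclideanSpace ℝ (Fin N)) R)ᶜ, (gV x - gW x)|
      ≤ ∫ x in (ball (0:EuclideanSpace ℝ (Fin N)) R)ᶜ, |gV x - gW x| := by
        simpa [Real.norm_eq_abs] using
          norm_integral_le_integral_norm (μ := volume.restrict (ball (0:EuclideanSpace ℝ (Fin N)) R)ᶜ)
            (fun x => gV x - gW x)
    _ ≤ ∫ x in (ball (0:EuclideanSpace ℝ (Fin N)) R)ᶜ, A^2 * B x := by
        apply setIntegral_mono_on (hsubI.abs.integrableOn)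
          ((hBint.const_mul (A^2)).integrableOn) measurableSet_ball.compl
        intro x hx
        exact hbound x (by rwa [mem_compl_iff, mem_ball_zero_iff, not_lt] at hx)
    _ ≤ ∫ x, A^2 * B x :=
        setIntegral_le_integral (hBint.const_mul (A^2))
          (ae_of_all _ fun x => mul_nonneg (by positivity) (hBnn x))
    _ = A^2 * K := by rw [integral_const_mul, hK_def]
    _ ≤ A^2 * (K+1) := by nlinarith [sq_nonneg A]
    _ = ((N:ℝ)*((N:ℝ)-2))^q * (K+1) * ε ^ q := by rw [hA2]; ring
end

section
/- Let N ≥ 3 be an integer, R > 0, and let ξ : ℝ^N → ℝ be a smooth function with 0 ≤ ξ ≤ 1, ξ ≡ 1 on the closed ball of radius R centered at 0, and ξ ≡ 0 outside the ball of radius 2R centered at 0. For ε > 0 define w_ε(x) = (N(N-2)ε)^{(N-2)/8} / (ε + ‖x‖²)^{(N-2)/4} and v_ε = ξ·w_ε, and set 2^* = 2N/(N-2). Then, as ε → 0⁺, the difference ∫_{ℝ^N} v_ε(x)^{2·2^*} dx − ∫_{ℝ^N} w_ε(x)^{2·2^*} dx is O(ε^{N/2}). -/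
set_option maxHeartbeats 1000000 in
/-- Estimate (4.11): with `v_ε = ξ w_ε` the truncated square-root instanton and
`2^* = 2N/(N-2)`, `∫ v_ε^(2·2^*) − ∫ w_ε^(2·2^*) = O(ε^(N/2))` as `ε → 0⁺`. -/
theorem truncated_instanton_critical_integral_estimate (N : ℕ) (hN : 3 ≤ N) (R : ℝ) (hR : 0 < R)
    (ξ : EuclideanSpace ℝ (Fin N) → ℝ) (hξ : ContDiff ℝ (⊤ : ℕ∞) ξ)
    (hξ01 : ∀ x, 0 ≤ ξ x ∧ ξ x ≤ 1)
    (hξ1 : ∀ x : EuclideanSpace ℝ (Fin N), ‖x‖ ≤ R → ξ x = 1)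
    (hξ0 : ∀ x : EuclideanSpace ℝ (Fin N), 2 * R ≤ ‖x‖ → ξ x = 0)
    (w v : ℝ → EuclideanSpace ℝ (Fin N) → ℝ)
    (hw : ∀ e : ℝ, 0 < e → ∀ x : EuclideanSpace ℝ (Fin N),
      w e x = ((N : ℝ) * ((N : ℝ) - 2) * e) ^ (((N : ℝ) - 2) / 8) /
        (e + ‖x‖ ^ 2) ^ (((N : ℝ) - 2) / 4))
    (hv : ∀ e : ℝ, ∀ x : EuclideanSpace ℝ (Fin N), v e x = ξ x * w e x) :
    ∃ C > (0 : ℝ), ∃ ε₀ > (0 : ℝ), ∀ ε : ℝ, 0 < ε → ε < ε₀ →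
      |(∫ x : EuclideanSpace ℝ (Fin N), v ε x ^ (2 * (2 * (N : ℝ) / ((N : ℝ) - 2)))) -
        (∫ x : EuclideanSpace ℝ (Fin N), w ε x ^ (2 * (2 * (N : ℝ) / ((N : ℝ) - 2))))| ≤
      C * ε ^ ((N : ℝ) / 2) := by
  have hN3 : (3 : ℝ) ≤ (N : ℝ) := by exact_mod_cast hN
  have hN2 : (0 : ℝ) < (N : ℝ) - 2 := by linarith
  have hNpos : (0 : ℝ) < (N : ℝ) := by linarith
  set p : ℝ := 2 * (2 * (N : ℝ) / ((N : ℝ) - 2)) with hpdef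
  have hp_pos : 0 < p := by
    have : 0 < 2 * (N : ℝ) / ((N : ℝ) - 2) := by positivity
    simp only [hpdef]; linarith
  have hN2ne : ((N : ℝ) - 2) ≠ 0 := ne_of_gt hN2
  have hap : ((N : ℝ) - 2) / 8 * p = (N : ℝ) / 2 := by
    rw [hpdef]; field_simp <;> ring
  have hbp : ((N : ℝ) - 2) / 4 * p = (N : ℝ) := by
    rw [hpdef]; field_simp <;> ring
  -- the dominating integrable function
  set g : EuclideanSpace ℝ (Fin N) → ℝ := fun x => ((1 : ℝ) + ‖x‖) ^ (-(2 * (N : ℝ))) with hgdef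
  have hfr : (Module.finrank ℝ (EuclideanSpace ℝ (Fin N)) : ℝ) < 2 * (N : ℝ) := by
    rw [finrank_euclideanSpace_fin]; linarith
  have hg : MeasureTheory.Integrable g := integrable_one_add_norm hfr
  have hgx : ∀ x : EuclideanSpace ℝ (Fin N), g x = (((1 : ℝ) + ‖x‖) ^ (2 * N))⁻¹ := by
    intro x
    have h1 : (0 : ℝ) ≤ 1 + ‖x‖ := by positivity
    show ((1 : ℝ) + ‖x‖) ^ (-(2 * (N : ℝ))) = (((1 : ℝ) + ‖x‖) ^ (2 * N))⁻¹
    rw [show (-(2 * (N : ℝ))) = -(((2 * N : ℕ) : ℝ)) by push_cast; ring,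
      Real.rpow_neg h1, Real.rpow_natCast]
  have hgnn : ∀ x : EuclideanSpace ℝ (Fin N), 0 ≤ g x := fun x =>
    Real.rpow_nonneg (by positivity) _
  set J : ℝ := ∫ x : EuclideanSpace ℝ (Fin N), g x with hJdef
  have hJ : 0 ≤ J := MeasureTheory.integral_nonneg hgnn
  set K : ℝ := ((N : ℝ) * ((N : ℝ) - 2)) ^ ((N : ℝ) / 2) with hKdef
  have hK : 0 < K := Real.rpow_pos_of_pos (by positivity) _
  set M : ℝ := K * ((R + 1) / R) ^ (2 * N) with hMdef
  have hM : 0 < M := by positivity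
  refine ⟨M * J + 1, by positivity, 1, one_pos, ?_⟩
  intro ε hε _
  have hεa : (0 : ℝ) ≤ ε ^ ((N : ℝ) / 2) := Real.rpow_nonneg hε.le _
  -- key pointwise formula for w^p
  have hwp : ∀ x : EuclideanSpace ℝ (Fin N),
      w ε x ^ p = K * ε ^ ((N : ℝ) / 2) * (((ε + ‖x‖ ^ 2)) ^ N)⁻¹ := by
    intro x
    have hd : (0 : ℝ) < ε + ‖x‖ ^ 2 := by positivity
    have hA : (0 : ℝ) < (N : ℝ) * ((N : ℝ) - 2) * ε := by positivity
    rw [hw ε hε x,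
      Real.div_rpow (Real.rpow_nonneg hA.le _) (Real.rpow_nonneg hd.le _),
      ← Real.rpow_mul hA.le, ← Real.rpow_mul hd.le, hap, hbp,
      Real.mul_rpow (by positivity : (0:ℝ) ≤ (N : ℝ) * ((N : ℝ) - 2)) hε.le,
      Real.rpow_natCast, div_eq_mul_inv, hKdef]
  have hwnn : ∀ x : EuclideanSpace ℝ (Fin N), 0 ≤ w ε x := by
    intro x; rw [hw ε hε x]; positivity
  have hvnn : ∀ x : EuclideanSpace ℝ (Fin N), 0 ≤ v ε x := by
    intro x; rw [hv ε x]; exact mul_nonneg (hξ01 x).1 (hwnn x)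
  have hvw : ∀ x : EuclideanSpace ℝ (Fin N), v ε x ≤ w ε x := by
    intro x; rw [hv ε x]
    nlinarith [(hξ01 x).2, hwnn x, (hξ01 x).1]
  have hvpw : ∀ x : EuclideanSpace ℝ (Fin N), v ε x ^ p ≤ w ε x ^ p := fun x =>
    Real.rpow_le_rpow (hvnn x) (hvw x) hp_pos.le
  have hFnn : ∀ x : EuclideanSpace ℝ (Fin N), 0 ≤ v ε x ^ p := fun x =>
    Real.rpow_nonneg (hvnn x) _
  -- pointwise bound on the difference
  have hdiff : ∀ x : EuclideanSpace ℝ (Fin N),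
      |v ε x ^ p - w ε x ^ p| ≤ M * ε ^ ((N : ℝ) / 2) * g x := by
    intro x
    by_cases hx : ‖x‖ ≤ R
    · rw [hv ε x, hξ1 x hx, one_mul, sub_self, abs_zero]
      have := hgnn x; positivity
    · push_neg at hx
      have hd : (0 : ℝ) < ε + ‖x‖ ^ 2 := by positivity
      have h3 : w ε x ^ p ≤ M * ε ^ ((N : ℝ) / 2) * g x := by
        rw [hwp x, hgx x]
        have h5 : R / (R + 1) * (1 + ‖x‖) ≤ ‖x‖ := by
          rw [div_mul_eq_mul_div, div_le_iff₀ (by linarith)]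
          nlinarith [norm_nonneg x]
        have key : (R / (R + 1)) ^ (2 * N) * (1 + ‖x‖) ^ (2 * N) ≤ (ε + ‖x‖ ^ 2) ^ N := by
          calc (R / (R + 1)) ^ (2 * N) * (1 + ‖x‖) ^ (2 * N)
              = (R / (R + 1) * (1 + ‖x‖)) ^ (2 * N) := (mul_pow _ _ _).symm
            _ ≤ ‖x‖ ^ (2 * N) := pow_le_pow_left₀ (by positivity) h5 _
            _ = (‖x‖ ^ 2) ^ N := by rw [← pow_mul]
            _ ≤ (ε + ‖x‖ ^ 2) ^ N := pow_le_pow_left₀ (by positivity) (by linarith) _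
        have hposL : (0 : ℝ) < (R / (R + 1)) ^ (2 * N) * (1 + ‖x‖) ^ (2 * N) := by positivity
        have hinv : ((ε + ‖x‖ ^ 2) ^ N)⁻¹
            ≤ ((R / (R + 1)) ^ (2 * N) * (1 + ‖x‖) ^ (2 * N))⁻¹ :=
          inv_anti₀ hposL key
        have hsplit : ((R / (R + 1)) ^ (2 * N) * (1 + ‖x‖) ^ (2 * N))⁻¹
            = ((R + 1) / R) ^ (2 * N) * ((1 + ‖x‖) ^ (2 * N))⁻¹ := by
          rw [mul_inv, ← inv_pow, inv_div]
        have h6 := mul_le_mul_of_nonneg_left hinv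
          (by positivity : (0 : ℝ) ≤ K * ε ^ ((N : ℝ) / 2))
        calc K * ε ^ ((N : ℝ) / 2) * ((ε + ‖x‖ ^ 2) ^ N)⁻¹
            ≤ K * ε ^ ((N : ℝ) / 2) *
              (((R / (R + 1)) ^ (2 * N) * (1 + ‖x‖) ^ (2 * N))⁻¹) := h6
          _ = M * ε ^ ((N : ℝ) / 2) * ((1 + ‖x‖) ^ (2 * N))⁻¹ := by
              rw [hsplit, hMdef]; ring
      rw [abs_sub_comm, abs_of_nonneg (by linarith [hvpw x, hFnn x])]
      linarith [hFnn x]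
  -- explicit continuous representations
  have hwfun : (fun x : EuclideanSpace ℝ (Fin N) => w ε x ^ p)
      = fun x => K * ε ^ ((N : ℝ) / 2) * (((ε + ‖x‖ ^ 2)) ^ N)⁻¹ := funext hwp
  have hGcont : Continuous (fun x : EuclideanSpace ℝ (Fin N) =>
      K * ε ^ ((N : ℝ) / 2) * (((ε + ‖x‖ ^ 2)) ^ N)⁻¹) := by
    refine continuous_const.mul (Continuous.inv₀ ?_ ?_)
    · exact (continuous_const.add (continuous_norm.pow 2)).pow N
    · intro x; positivity
  have hvfun : (fun x : EuclideanSpace ℝ (Fin N) => v ε x ^ p)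
      = fun x => (ξ x * (((N : ℝ) * ((N : ℝ) - 2) * ε) ^ (((N : ℝ) - 2) / 8) /
        (ε + ‖x‖ ^ 2) ^ (((N : ℝ) - 2) / 4))) ^ p :=
    funext fun x => by rw [hv ε x, hw ε hε x]
  have hFcont : Continuous (fun x : EuclideanSpace ℝ (Fin N) =>
      (ξ x * (((N : ℝ) * ((N : ℝ) - 2) * ε) ^ (((N : ℝ) - 2) / 8) /
        (ε + ‖x‖ ^ 2) ^ (((N : ℝ) - 2) / 4))) ^ p) := by
    have hden : Continuous (fun x : EuclideanSpace ℝ (Fin N) =>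
        (ε + ‖x‖ ^ 2) ^ (((N : ℝ) - 2) / 4)) := by
      refine (continuous_const.add (continuous_norm.pow 2)).rpow_const ?_
      intro x; left; exact (add_pos_of_pos_of_nonneg hε (pow_nonneg (norm_nonneg x) 2)).ne'
    have hbase : Continuous (fun x : EuclideanSpace ℝ (Fin N) =>
        ξ x * (((N : ℝ) * ((N : ℝ) - 2) * ε) ^ (((N : ℝ) - 2) / 8) /
          (ε + ‖x‖ ^ 2) ^ (((N : ℝ) - 2) / 4))) :=
      hξ.continuous.mul (continuous_const.div hden (fun x => by positivity))
    exact hbase.rpow_const (fun x => Or.inr hp_pos.le)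
  -- integrability
  set m : ℝ := min ε 1 with hmdef
  have hm : 0 < m := lt_min hε one_pos
  have hm1 : m ≤ 1 := min_le_right _ _
  have hmε : m ≤ ε := min_le_left _ _
  have hdb : ∀ x : EuclideanSpace ℝ (Fin N), m / 2 * (1 + ‖x‖) ^ 2 ≤ ε + ‖x‖ ^ 2 := by
    intro x
    nlinarith [sq_nonneg (m - ‖x‖), norm_nonneg x, hm, hm1, hmε]
  set c₁ : ℝ := K * ε ^ ((N : ℝ) / 2) * ((m / 2) ^ N)⁻¹ with hc₁def
  have hGbound : ∀ x : EuclideanSpace ℝ (Fin N),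
      w ε x ^ p ≤ c₁ * g x := by
    intro x
    rw [hwp x, hgx x]
    have key : (m / 2) ^ N * ((1 + ‖x‖) ^ (2 * N)) ≤ (ε + ‖x‖ ^ 2) ^ N := by
      calc (m / 2) ^ N * (1 + ‖x‖) ^ (2 * N)
          = (m / 2 * (1 + ‖x‖) ^ 2) ^ N := by rw [mul_pow, ← pow_mul]
        _ ≤ (ε + ‖x‖ ^ 2) ^ N := pow_le_pow_left₀ (by positivity) (hdb x) _
    have hposL : (0 : ℝ) < (m / 2) ^ N * ((1 + ‖x‖) ^ (2 * N)) := by positivity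
    have hinv : ((ε + ‖x‖ ^ 2) ^ N)⁻¹
        ≤ ((m / 2) ^ N * ((1 + ‖x‖) ^ (2 * N)))⁻¹ := inv_anti₀ hposL key
    have h6 := mul_le_mul_of_nonneg_left hinv
      (by positivity : (0 : ℝ) ≤ K * ε ^ ((N : ℝ) / 2))
    calc K * ε ^ ((N : ℝ) / 2) * ((ε + ‖x‖ ^ 2) ^ N)⁻¹
        ≤ K * ε ^ ((N : ℝ) / 2) * (((m / 2) ^ N * ((1 + ‖x‖) ^ (2 * N)))⁻¹) := h6
      _ = c₁ * ((1 + ‖x‖) ^ (2 * N))⁻¹ := by rw [mul_inv, hc₁def]; ring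
  have hGnn : ∀ x : EuclideanSpace ℝ (Fin N), 0 ≤ w ε x ^ p := fun x =>
    Real.rpow_nonneg (hwnn x) _
  have hc₁g : MeasureTheory.Integrable (fun x : EuclideanSpace ℝ (Fin N) => c₁ * g x) :=
    hg.const_mul c₁
  have hGint : MeasureTheory.Integrable (fun x : EuclideanSpace ℝ (Fin N) => w ε x ^ p) := by
    refine hc₁g.mono' ?_ (Filter.Eventually.of_forall fun x => ?_)
    · rw [hwfun]; exact hGcont.aestronglyMeasurable
    · rw [Real.norm_eq_abs, abs_of_nonneg (hGnn x)]
      exact hGbound x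
  have hFint : MeasureTheory.Integrable (fun x : EuclideanSpace ℝ (Fin N) => v ε x ^ p) := by
    refine hc₁g.mono' ?_ (Filter.Eventually.of_forall fun x => ?_)
    · rw [hvfun]; exact hFcont.aestronglyMeasurable
    · rw [Real.norm_eq_abs, abs_of_nonneg (hFnn x)]
      exact le_trans (hvpw x) (hGbound x)
  -- conclusion
  rw [← MeasureTheory.integral_sub hFint hGint]
  calc |∫ x : EuclideanSpace ℝ (Fin N), (v ε x ^ p - w ε x ^ p)|
      ≤ ∫ x : EuclideanSpace ℝ (Fin N), |v ε x ^ p - w ε x ^ p| := by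
        simpa [Real.norm_eq_abs] using
          MeasureTheory.norm_integral_le_integral_norm
            (fun x : EuclideanSpace ℝ (Fin N) => v ε x ^ p - w ε x ^ p)
    _ ≤ ∫ x : EuclideanSpace ℝ (Fin N), M * ε ^ ((N : ℝ) / 2) * g x := by
        refine MeasureTheory.integral_mono ((hFint.sub hGint).abs)
          (hg.const_mul _) (fun x => hdiff x)
    _ = M * ε ^ ((N : ℝ) / 2) * J := by
        rw [hJdef, MeasureTheory.integral_const_mul]
    _ ≤ (M * J + 1) * ε ^ ((N : ℝ) / 2) := by nlinarith [hεa, hJ, hM.le]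
end

section
/- Let N ≥ 3 be an integer, R > 0, and let ξ : ℝ^N → ℝ be a smooth function with 0 ≤ ξ ≤ 1, ξ ≡ 1 on the closed ball of radius R centered at 0, and ξ ≡ 0 outside the ball of radius 2R centered at 0. For ε > 0 define w_ε(x) = (N(N-2)ε)^{(N-2)/8} / (ε + ‖x‖²)^{(N-2)/4} and v_ε = ξ·w_ε. Then, as ε → 0⁺, ∫_{ℝ^N} ‖∇v_ε(x)‖² dx = O(ε^{(N-2)/4} |ln ε|), i.e., there exist constants C > 0 and ε₀ > 0 such that ∫_{ℝ^N} ‖∇v_ε‖² dx ≤ C ε^{(N-2)/4} |ln ε| for all 0 < ε < ε₀. -/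
open MeasureTheory Metric Set

set_option maxHeartbeats 1000000
set_option synthInstance.maxHeartbeats 400000

/-- Estimate (4.12): with `v_ε = ξ w_ε` the truncated square-root instanton,
`∫ |∇ v_ε|² = O(ε^((N-2)/4) |ln ε|)` as `ε → 0⁺`. -/
theorem truncated_instanton_gradient_estimate (N : ℕ) (hN : 3 ≤ N) (R : ℝ) (hR : 0 < R)
    (ξ : EuclideanSpace ℝ (Fin N) → ℝ) (hξ : ContDiff ℝ (⊤ : ℕ∞) ξ)
    (hξ01 : ∀ x, 0 ≤ ξ x ∧ ξ x ≤ 1)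
    (hξ1 : ∀ x : EuclideanSpace ℝ (Fin N), ‖x‖ ≤ R → ξ x = 1)
    (hξ0 : ∀ x : EuclideanSpace ℝ (Fin N), 2 * R ≤ ‖x‖ → ξ x = 0)
    (w v : ℝ → EuclideanSpace ℝ (Fin N) → ℝ)
    (hw : ∀ e : ℝ, 0 < e → ∀ x : EuclideanSpace ℝ (Fin N),
      w e x = ((N : ℝ) * ((N : ℝ) - 2) * e) ^ (((N : ℝ) - 2) / 8) /
        (e + ‖x‖ ^ 2) ^ (((N : ℝ) - 2) / 4))
    (hv : ∀ e : ℝ, ∀ x : EuclideanSpace ℝ (Fin N), v e x = ξ x * w e x) :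
    ∃ C > (0 : ℝ), ∃ ε₀ > (0 : ℝ), ∀ ε : ℝ, 0 < ε → ε < ε₀ →
      (∫ x : EuclideanSpace ℝ (Fin N), ‖gradient (v ε) x‖ ^ 2) ≤
        C * ε ^ (((N : ℝ) - 2) / 4) * |Real.log ε| := by
  classical
  have hN3 : (3 : ℝ) ≤ (N : ℝ) := by exact_mod_cast hN
  set q : ℝ := ((N : ℝ) - 2) / 4 with hqdef
  have hq0 : 0 < q := by rw [hqdef]; linarith
  -- bound on the derivative of ξ
  obtain ⟨M, hM0, hM⟩ : ∃ M, 0 ≤ M ∧ ∀ x : EuclideanSpace ℝ (Fin N), ‖fderiv ℝ ξ x‖ ≤ M := by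
    have hcont : Continuous (fderiv ℝ ξ) := hξ.continuous_fderiv (by simp)
    obtain ⟨M₀, hM₀⟩ := (isCompact_closedBall (0 : EuclideanSpace ℝ (Fin N))
      (2 * R)).exists_bound_of_continuousOn hcont.continuousOn
    refine ⟨max M₀ 0, le_max_right _ _, fun x => ?_⟩
    by_cases hx : ‖x‖ ≤ 2 * R
    · exact le_trans (hM₀ x (mem_closedBall_zero_iff.2 hx)) (le_max_left _ _)
    · have hopen : IsOpen {y : EuclideanSpace ℝ (Fin N) | 2 * R < ‖y‖} :=
        isOpen_lt continuous_const continuous_norm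
      have hxmem : x ∈ {y : EuclideanSpace ℝ (Fin N) | 2 * R < ‖y‖} := lt_of_not_ge hx
      have hev : ξ =ᶠ[nhds x] fun _ => (0 : ℝ) :=
        Filter.eventually_of_mem (hopen.mem_nhds hxmem) fun y hy => hξ0 y (le_of_lt hy)
      rw [hev.fderiv_eq, fderiv_const_apply]
      simp [le_max_right]
  set K : ℝ := (2 * M ^ 2 * (1 + 4 * R ^ 2) + 8 * q ^ 2) * ((N : ℝ) * ((N : ℝ) - 2)) ^ q
    with hKdef
  have hNN2 : (0 : ℝ) < (N : ℝ) * ((N : ℝ) - 2) := by nlinarith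
  have hK : 0 < K := by
    apply mul_pos
    · have h8 : 0 < 8 * q ^ 2 := by
        have := pow_pos hq0 2
        linarith
      have hMR : 0 ≤ 2 * M ^ 2 * (1 + 4 * R ^ 2) := by positivity
      linarith
    · exact Real.rpow_pos_of_pos hNN2 q
  set cN : ℝ := (N : ℝ) * (volume (ball (0 : EuclideanSpace ℝ (Fin N)) 1)).toReal with hcNdef
  have hcN : 0 ≤ cN := by positivity
  set C₁ : ℝ := 3 / 2 + |Real.log (2 * R)| with hC₁def
  have hC₁ : 0 < C₁ := by positivity
  refine ⟨K * cN * C₁ + 1, by positivity, min (Real.exp (-1)) (4 * R ^ 2), by positivity,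
    fun ε hε hεlt => ?_⟩
  have hε1 : ε < Real.exp (-1) := lt_of_lt_of_le hεlt (min_le_left _ _)
  have hεR : ε < 4 * R ^ 2 := lt_of_lt_of_le hεlt (min_le_right _ _)
  have hεle1 : ε ≤ 1 := le_of_lt (lt_of_lt_of_le hε1 (by
    rw [← Real.exp_zero]; exact (Real.exp_le_exp.2 (by norm_num)).trans_eq rfl))
  have hlogε : Real.log ε < -1 := by
    have := Real.log_lt_log hε hε1
    rwa [Real.log_exp] at this
  have habslog : 1 ≤ |Real.log ε| := by
    rw [abs_of_neg (by linarith)]; linarith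
  -- the comparison function
  set G : EuclideanSpace ℝ (Fin N) → ℝ :=
    indicator (closedBall (0 : EuclideanSpace ℝ (Fin N)) (2 * R))
      (fun x => (ε + ‖x‖ ^ 2) ^ (-(N : ℝ) / 2)) with hGdef
  have hGnonneg : ∀ x, 0 ≤ G x := fun x =>
    indicator_nonneg (fun y _ => Real.rpow_nonneg (by positivity) _) x
  -- pointwise bound
  have key : ∀ x : EuclideanSpace ℝ (Fin N),
      ‖gradient (v ε) x‖ ^ 2 ≤ K * ε ^ q * G x := by
    set A : ℝ := ((N : ℝ) * ((N : ℝ) - 2) * ε) ^ (((N : ℝ) - 2) / 8) with hAdef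
    have hA0 : 0 < A := Real.rpow_pos_of_pos (mul_pos hNN2 hε) _
    have hA2 : A ^ 2 = ((N : ℝ) * ((N : ℝ) - 2)) ^ q * ε ^ q := by
      rw [hAdef, ← Real.rpow_natCast (((N : ℝ) * ((N : ℝ) - 2) * ε) ^ (((N : ℝ) - 2) / 8)) 2,
        ← Real.rpow_mul (mul_pos hNN2 hε).le,
        show ((N : ℝ) - 2) / 8 * ((2 : ℕ) : ℝ) = q by push_cast; rw [hqdef]; ring]
      exact Real.mul_rpow hNN2.le hε.le
    have hveq : v ε = fun y => ξ y * (A * (ε + ‖y‖ ^ 2) ^ (-q)) := by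
      funext y
      rw [hv, hw ε hε, Real.rpow_neg (by positivity), div_eq_mul_inv]
    intro x
    by_cases hx : ‖x‖ ≤ 2 * R
    · have hg : 0 < ε + ‖x‖ ^ 2 := by positivity
      have hGx : G x = (ε + ‖x‖ ^ 2) ^ (-(N : ℝ) / 2) :=
        indicator_of_mem (mem_closedBall_zero_iff.2 hx) _
      set p1 : ℝ := (ε + ‖x‖ ^ 2) ^ (-q - 1) with hp1
      set p2 : ℝ := (ε + ‖x‖ ^ 2) ^ (-q) with hp2
      have hp1pos : 0 < p1 := Real.rpow_pos_of_pos hg _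
      have hp2pos : 0 < p2 := Real.rpow_pos_of_pos hg _
      -- derivative of the radial factor
      have hF : HasDerivAt (fun t : ℝ => A * (ε + t) ^ (-q)) (A * (-q * p1)) (‖x‖ ^ 2) := by
        have h1 : HasDerivAt (fun t : ℝ => ε + t) 1 (‖x‖ ^ 2) := (hasDerivAt_id _).const_add ε
        have h2 : HasDerivAt (fun u : ℝ => u ^ (-q)) (-q * p1) (ε + ‖x‖ ^ 2) := by
          have := Real.hasDerivAt_rpow_const (x := ε + ‖x‖ ^ 2) (p := -q) (Or.inl hg.ne')
          simpa [hp1, show -q - 1 = -q - 1 by rfl, sub_eq_add_neg] using this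
        simpa using (h2.comp _ h1).const_mul A
      have hns : HasFDerivAt (fun y : EuclideanSpace ℝ (Fin N) => ‖y‖ ^ 2)
          (2 • (innerSL ℝ x)) x := (hasStrictFDerivAt_norm_sq x).hasFDerivAt
      have hW : HasFDerivAt (fun y : EuclideanSpace ℝ (Fin N) => A * (ε + ‖y‖ ^ 2) ^ (-q))
          ((A * (-q * p1)) • (2 • (innerSL ℝ x))) x := hF.comp_hasFDerivAt (f := fun y : EuclideanSpace ℝ (Fin N) => ‖y‖ ^ 2) x hns
      have hξF : HasFDerivAt ξ (fderiv ℝ ξ x) x := (hξ.differentiable (by simp) x).hasFDerivAt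
      have hvF : HasFDerivAt (v ε)
          (ξ x • ((A * (-q * p1)) • (2 • (innerSL ℝ x))) + (A * p2) • fderiv ℝ ξ x) x := by
        rw [hveq]
        exact hξF.mul hW
      have hgradnorm : ‖gradient (v ε) x‖ = ‖fderiv ℝ (v ε) x‖ :=
        LinearIsometryEquiv.norm_map (InnerProductSpace.toDual ℝ _).symm _
      have hSnorm : ‖(A * (-q * p1)) • (2 • (innerSL ℝ x))‖ ≤ A * q * p1 * (2 * ‖x‖) := by
        have habs : |A * (-q * p1)| = A * q * p1 := by
          rw [abs_mul, abs_of_pos hA0, abs_mul, abs_neg, abs_of_pos hq0, abs_of_pos hp1pos]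
          ring
        have h2L : ‖2 • (innerSL ℝ x)‖ ≤ 2 * ‖x‖ := by
          rw [two_smul]
          calc ‖innerSL ℝ x + innerSL ℝ x‖ ≤ ‖innerSL ℝ x‖ + ‖innerSL ℝ x‖ := norm_add_le _ _
            _ = 2 * ‖x‖ := by rw [innerSL_apply_norm]; ring
        calc ‖(A * (-q * p1)) • (2 • (innerSL ℝ x))‖
            ≤ ‖A * (-q * p1)‖ * ‖2 • (innerSL ℝ x)‖ := norm_smul_le _ _
          _ = (A * q * p1) * ‖2 • (innerSL ℝ x)‖ := by rw [Real.norm_eq_abs, habs]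
          _ ≤ (A * q * p1) * (2 * ‖x‖) := mul_le_mul_of_nonneg_left h2L (by positivity)
      have hDle : ‖fderiv ℝ (v ε) x‖ ≤ A * q * p1 * (2 * ‖x‖) + A * p2 * M := by
        rw [hvF.fderiv]
        refine (norm_add_le _ _).trans (add_le_add ?_ ?_)
        · calc ‖ξ x • ((A * (-q * p1)) • (2 • (innerSL ℝ x)))‖
              ≤ ‖ξ x‖ * ‖(A * (-q * p1)) • (2 • (innerSL ℝ x))‖ := norm_smul_le _ _
            _ ≤ 1 * (A * q * p1 * (2 * ‖x‖)) := by
                refine mul_le_mul ?_ hSnorm (norm_nonneg _) zero_le_one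
                rw [Real.norm_eq_abs, abs_of_nonneg (hξ01 x).1]
                exact (hξ01 x).2
            _ = A * q * p1 * (2 * ‖x‖) := one_mul _
        · calc ‖(A * p2) • fderiv ℝ ξ x‖
              ≤ ‖A * p2‖ * ‖fderiv ℝ ξ x‖ := ContinuousLinearMap.opNorm_smul_le _ _
            _ ≤ (A * p2) * M := by
                rw [Real.norm_eq_abs, abs_of_nonneg (by positivity : (0 : ℝ) ≤ A * p2)]
                exact mul_le_mul_of_nonneg_left (hM x) (by positivity)
      -- rpow algebra
      have hr1 : p1 ^ 2 = (ε + ‖x‖ ^ 2) ^ (-2 * q - 2) := by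
        rw [hp1, ← Real.rpow_natCast ((ε + ‖x‖ ^ 2) ^ (-q - 1)) 2, ← Real.rpow_mul hg.le]
        congr 1; push_cast; ring
      have hr2 : p2 ^ 2 = (ε + ‖x‖ ^ 2) ^ (-2 * q) := by
        rw [hp2, ← Real.rpow_natCast ((ε + ‖x‖ ^ 2) ^ (-q)) 2, ← Real.rpow_mul hg.le]
        congr 1; push_cast; ring
      have hxg : ‖x‖ ^ 2 ≤ ε + ‖x‖ ^ 2 := le_add_of_nonneg_left hε.le
      have hr3 : (ε + ‖x‖ ^ 2) * (ε + ‖x‖ ^ 2) ^ (-2 * q - 2) = (ε + ‖x‖ ^ 2) ^ (-(N : ℝ) / 2) := by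
        nth_rewrite 1 [← Real.rpow_one (ε + ‖x‖ ^ 2)]
        rw [← Real.rpow_add hg]
        congr 1; rw [hqdef]; ring
      have hr4 : (ε + ‖x‖ ^ 2) ^ (-2 * q) = (ε + ‖x‖ ^ 2) ^ (-(N : ℝ) / 2) * (ε + ‖x‖ ^ 2) := by
        rw [show (-2 * q : ℝ) = -(N : ℝ) / 2 + 1 by rw [hqdef]; ring, Real.rpow_add hg,
          Real.rpow_one]
      have hgb : ε + ‖x‖ ^ 2 ≤ 1 + 4 * R ^ 2 := by
        have hx2 : ‖x‖ ^ 2 ≤ (2 * R) ^ 2 := pow_le_pow_left₀ (norm_nonneg x) hx 2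
        have : (2 * R) ^ 2 = 4 * R ^ 2 := by ring
        linarith
      have hfin1 : ‖x‖ ^ 2 * p1 ^ 2 ≤ (ε + ‖x‖ ^ 2) ^ (-(N : ℝ) / 2) := by
        rw [hr1]
        calc ‖x‖ ^ 2 * (ε + ‖x‖ ^ 2) ^ (-2 * q - 2)
            ≤ (ε + ‖x‖ ^ 2) * (ε + ‖x‖ ^ 2) ^ (-2 * q - 2) :=
              mul_le_mul_of_nonneg_right hxg (Real.rpow_nonneg hg.le _)
          _ = (ε + ‖x‖ ^ 2) ^ (-(N : ℝ) / 2) := hr3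
      have hfin2 : p2 ^ 2 ≤ (1 + 4 * R ^ 2) * (ε + ‖x‖ ^ 2) ^ (-(N : ℝ) / 2) := by
        rw [hr2, hr4]
        calc (ε + ‖x‖ ^ 2) ^ (-(N : ℝ) / 2) * (ε + ‖x‖ ^ 2)
            ≤ (ε + ‖x‖ ^ 2) ^ (-(N : ℝ) / 2) * (1 + 4 * R ^ 2) :=
              mul_le_mul_of_nonneg_left hgb (Real.rpow_nonneg hg.le _)
          _ = (1 + 4 * R ^ 2) * (ε + ‖x‖ ^ 2) ^ (-(N : ℝ) / 2) := mul_comm _ _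
      -- assemble
      set a : ℝ := A * q * p1 * (2 * ‖x‖) with hadef
      set b : ℝ := A * p2 * M with hbdef
      have ha0 : 0 ≤ a := by positivity
      have hb0 : 0 ≤ b := by positivity
      calc ‖gradient (v ε) x‖ ^ 2 = ‖fderiv ℝ (v ε) x‖ ^ 2 := by rw [hgradnorm]
        _ ≤ (a + b) ^ 2 := pow_le_pow_left₀ (norm_nonneg _) hDle 2
        _ ≤ 2 * a ^ 2 + 2 * b ^ 2 := by
            have hsq := sq_nonneg (a - b)
            have : (a + b) ^ 2 = 2 * a ^ 2 + 2 * b ^ 2 - (a - b) ^ 2 := by ring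
            linarith
        _ = 8 * A ^ 2 * q ^ 2 * (‖x‖ ^ 2 * p1 ^ 2) + 2 * A ^ 2 * M ^ 2 * p2 ^ 2 := by
            rw [hadef, hbdef]; ring
        _ ≤ 8 * A ^ 2 * q ^ 2 * ((ε + ‖x‖ ^ 2) ^ (-(N : ℝ) / 2))
              + 2 * A ^ 2 * M ^ 2 * ((1 + 4 * R ^ 2) * (ε + ‖x‖ ^ 2) ^ (-(N : ℝ) / 2)) :=
            add_le_add (mul_le_mul_of_nonneg_left hfin1 (by positivity))
              (mul_le_mul_of_nonneg_left hfin2 (by positivity))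
        _ = (2 * M ^ 2 * (1 + 4 * R ^ 2) + 8 * q ^ 2) * A ^ 2
              * (ε + ‖x‖ ^ 2) ^ (-(N : ℝ) / 2) := by ring
        _ = K * ε ^ q * G x := by rw [hGx, hA2, hKdef]; ring
    · have hGx : G x = 0 := indicator_of_notMem (fun h => hx (mem_closedBall_zero_iff.1 h)) _
      have hopen : IsOpen {y : EuclideanSpace ℝ (Fin N) | 2 * R < ‖y‖} :=
        isOpen_lt continuous_const continuous_norm
      have hev : v ε =ᶠ[nhds x] fun _ => (0 : ℝ) :=
        Filter.eventually_of_mem (hopen.mem_nhds (lt_of_not_ge hx)) fun y hy => by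
          rw [hv, hξ0 y (le_of_lt hy), zero_mul]
      have hfd : fderiv ℝ (v ε) x = 0 := by
        rw [hev.fderiv_eq]
        exact fderiv_const_apply 0
      have hgrad0 : gradient (v ε) x = 0 := by
        show (InnerProductSpace.toDual ℝ _).symm (fderiv ℝ (v ε) x) = 0
        rw [hfd]; simp
      rw [hgrad0, hGx]; simp
  -- integrability of the comparison function
  have hGint : Integrable G := by
    have hc : Continuous fun x : EuclideanSpace ℝ (Fin N) => (ε + ‖x‖ ^ 2) ^ (-(N : ℝ) / 2) :=
      (continuous_const.add (continuous_norm.pow 2)).rpow_const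
        (fun x => Or.inl (by positivity : ε + ‖x‖ ^ 2 ≠ 0))
    exact (hc.continuousOn.integrableOn_compact (isCompact_closedBall _ _)).integrable_indicator
      measurableSet_closedBall
  have h1 : (∫ x : EuclideanSpace ℝ (Fin N), ‖gradient (v ε) x‖ ^ 2) ≤
      ∫ x, K * ε ^ q * G x := by
    refine integral_mono_of_nonneg (Filter.Eventually.of_forall fun x => by positivity)
      ((hGint.const_mul _)) (Filter.Eventually.of_forall key)
  have h2 : (∫ x, K * ε ^ q * G x) = K * ε ^ q * ∫ x, G x := integral_const_mul _ _
  -- the 1D profile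
  set f₀ : ℝ → ℝ := indicator (Iic (2 * R)) (fun r => (ε + r ^ 2) ^ (-(N : ℝ) / 2)) with hf₀def
  have hGf : ∀ x : EuclideanSpace ℝ (Fin N), G x = f₀ ‖x‖ := by
    intro x
    by_cases hx : ‖x‖ ≤ 2 * R
    · rw [hGdef, hf₀def, indicator_of_mem (mem_closedBall_zero_iff.2 hx),
        indicator_of_mem (mem_Iic.2 hx)]
    · rw [hGdef, hf₀def, indicator_of_notMem (fun h => hx (mem_closedBall_zero_iff.1 h)),
        indicator_of_notMem (fun h => hx (mem_Iic.1 h))]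
  have hNonempty : Nonempty (Fin N) := ⟨⟨0, by omega⟩⟩
  have hNontrivial : Nontrivial (EuclideanSpace ℝ (Fin N)) := inferInstance
  have hradial : (∫ x, G x) = cN * ∫ y in Ioi (0 : ℝ), y ^ (N - 1) * f₀ y := by
    have heq : (∫ x, G x) = ∫ x : EuclideanSpace ℝ (Fin N), f₀ ‖x‖ := by
      exact integral_congr_ae (Filter.Eventually.of_forall hGf)
    rw [heq, integral_fun_norm_addHaar volume f₀]
    simp only [finrank_euclideanSpace_fin, nsmul_eq_mul, smul_eq_mul, hcNdef, measureReal_def]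
    ring
  -- 1D estimate
  have h1d : (∫ y in Ioi (0 : ℝ), y ^ (N - 1) * f₀ y) ≤ C₁ * |Real.log ε| := by
    set s : ℝ := Real.sqrt ε with hsdef
    have hs0 : 0 < s := Real.sqrt_pos.2 hε
    have hs2R : s ≤ 2 * R := by
      have : s ≤ Real.sqrt (4 * R ^ 2) := Real.sqrt_le_sqrt (le_of_lt hεR)
      rwa [show (4 : ℝ) * R ^ 2 = (2 * R) ^ 2 by ring, Real.sqrt_sq (by linarith)] at this
    set g₁ : ℝ → ℝ := fun r => indicator (Ioc 0 s) (fun _ => s⁻¹) r +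
      indicator (Ioc s (2 * R)) (fun r => r⁻¹) r with hg₁def
    have hg₁nonneg : ∀ r, 0 ≤ g₁ r := fun r => add_nonneg
      (indicator_nonneg (fun _ _ => by positivity) r)
      (indicator_nonneg (fun y hy => by
        have : 0 < y := lt_trans hs0 hy.1
        positivity) r)
    have hint1 : Integrable (indicator (Ioc 0 s) (fun _ => s⁻¹) : ℝ → ℝ) := by
      refine (integrableOn_const measure_Ioc_lt_top.ne).integrable_indicator
        measurableSet_Ioc
    have hint2 : Integrable (indicator (Ioc s (2 * R)) (fun r : ℝ => r⁻¹)) := by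
      have hco : ContinuousOn (fun r : ℝ => r⁻¹) (Icc s (2 * R)) :=
        ContinuousOn.inv₀ continuousOn_id fun r hr => ne_of_gt (lt_of_lt_of_le hs0 hr.1)
      exact ((hco.integrableOn_compact isCompact_Icc).mono_set
        Ioc_subset_Icc_self).integrable_indicator measurableSet_Ioc
    have hg₁int : Integrable g₁ := hint1.add hint2
    -- pointwise comparison on Ioi 0
    have hptwise : ∀ y : ℝ, y ∈ Ioi (0 : ℝ) → y ^ (N - 1) * f₀ y ≤ g₁ y := by
      intro y hy
      have hy0 : 0 < y := hy
      by_cases hy2R : y ≤ 2 * R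
      · have hf₀y : f₀ y = (ε + y ^ 2) ^ (-(N : ℝ) / 2) := indicator_of_mem (mem_Iic.2 hy2R) _
        have hgy : 0 < ε + y ^ 2 := by positivity
        -- main bound: y^(N-1) * (ε+y²)^(-N/2) ≤ (ε+y²)^(-1/2)
        have hmain : y ^ (N - 1) * (ε + y ^ 2) ^ (-(N : ℝ) / 2) ≤ (ε + y ^ 2) ^ (-(1 : ℝ) / 2) := by
          have hyle : y ≤ (ε + y ^ 2) ^ ((1 : ℝ) / 2) := by
            rw [← Real.sqrt_eq_rpow]
            have : y = Real.sqrt (y ^ 2) := by rw [Real.sqrt_sq hy0.le]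
            rw [this]
            exact Real.sqrt_le_sqrt (by nlinarith [Real.sq_sqrt hy0.le])
          have h1 : y ^ (N - 1) ≤ (ε + y ^ 2) ^ (((N : ℝ) - 1) / 2) := by
            calc y ^ (N - 1) ≤ ((ε + y ^ 2) ^ ((1 : ℝ) / 2)) ^ (N - 1) :=
                  pow_le_pow_left₀ hy0.le hyle _
              _ = (ε + y ^ 2) ^ (((N : ℝ) - 1) / 2) := by
                  rw [← Real.rpow_natCast ((ε + y ^ 2) ^ ((1 : ℝ) / 2)) (N - 1),
                    ← Real.rpow_mul hgy.le]
                  congr 1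
                  rw [Nat.cast_sub (by omega)]
                  push_cast; ring
          calc y ^ (N - 1) * (ε + y ^ 2) ^ (-(N : ℝ) / 2)
              ≤ (ε + y ^ 2) ^ (((N : ℝ) - 1) / 2) * (ε + y ^ 2) ^ (-(N : ℝ) / 2) :=
                mul_le_mul_of_nonneg_right h1 (Real.rpow_nonneg hgy.le _)
            _ = (ε + y ^ 2) ^ (-(1 : ℝ) / 2) := by
                rw [← Real.rpow_add hgy]; congr 1; ring
        rw [hf₀y]
        by_cases hys : y ≤ s
        · have hg₁y : g₁ y = s⁻¹ := by
            rw [hg₁def]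
            simp only
            rw [indicator_of_mem (by exact ⟨hy0, hys⟩ : y ∈ Ioc 0 s),
              indicator_of_notMem (fun h => absurd h.1 (not_lt.2 hys)), add_zero]
          rw [hg₁y]
          refine hmain.trans ?_
          have h2 : (ε + y ^ 2) ^ (-(1 : ℝ) / 2) ≤ ε ^ (-(1 : ℝ) / 2) :=
            Real.rpow_le_rpow_of_nonpos hε (le_add_of_nonneg_right (sq_nonneg y)) (by norm_num)
          refine h2.trans_eq ?_
          rw [show -(1 : ℝ) / 2 = -(1 / 2) by ring, Real.rpow_neg hε.le, ← Real.sqrt_eq_rpow, hsdef]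
        · have hg₁y : g₁ y = y⁻¹ := by
            rw [hg₁def]
            simp only
            rw [indicator_of_notMem (fun h => absurd h.2 hys),
              indicator_of_mem (by exact ⟨lt_of_not_ge hys, hy2R⟩ : y ∈ Ioc s (2 * R)), zero_add]
          rw [hg₁y]
          refine hmain.trans ?_
          have h2 : (ε + y ^ 2) ^ (-(1 : ℝ) / 2) ≤ (y ^ 2) ^ (-(1 : ℝ) / 2) :=
            Real.rpow_le_rpow_of_nonpos (by positivity) (by linarith) (by norm_num)
          refine h2.trans_eq ?_
          rw [← Real.rpow_natCast y 2, ← Real.rpow_mul hy0.le, ← Real.rpow_neg_one y]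
          norm_num
      · have hf₀y : f₀ y = 0 := indicator_of_notMem (fun h => hy2R (mem_Iic.1 h)) _
        rw [hf₀y, mul_zero]
        exact hg₁nonneg y
    have hle1 : (∫ y in Ioi (0 : ℝ), y ^ (N - 1) * f₀ y) ≤ ∫ y in Ioi (0 : ℝ), g₁ y := by
      refine integral_mono_of_nonneg ?_ (Integrable.restrict hg₁int) ?_
      · refine (ae_restrict_iff' measurableSet_Ioi).2 (Filter.Eventually.of_forall fun y hy => ?_)
        have hy0 : 0 < y := hy
        exact mul_nonneg (pow_nonneg hy0.le _)
          (indicator_nonneg (fun r _ => Real.rpow_nonneg (by positivity) _) y)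
      · exact (ae_restrict_iff' measurableSet_Ioi).2 (Filter.Eventually.of_forall hptwise)
    have hle2 : (∫ y in Ioi (0 : ℝ), g₁ y) ≤ ∫ y, g₁ y :=
      setIntegral_le_integral hg₁int (Filter.Eventually.of_forall hg₁nonneg)
    have hval : (∫ y, g₁ y) = 1 + Real.log (2 * R / s) := by
      rw [hg₁def, integral_add hint1 hint2, integral_indicator measurableSet_Ioc,
        integral_indicator measurableSet_Ioc]
      have e1 : (∫ _ in Ioc (0 : ℝ) s, s⁻¹) = 1 := by
        rw [setIntegral_const, measureReal_def, Real.volume_Ioc, smul_eq_mul,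
          ENNReal.toReal_ofReal (by linarith), sub_zero, mul_inv_cancel₀ (ne_of_gt hs0)]
      have e2 : (∫ y in Ioc s (2 * R), y⁻¹) = Real.log (2 * R / s) := by
        rw [← intervalIntegral.integral_of_le hs2R]
        exact integral_inv_of_pos hs0 (by linarith)
      rw [e1, e2]
    have hlog : Real.log (2 * R / s) ≤ |Real.log (2 * R)| + |Real.log ε| / 2 := by
      rw [Real.log_div (by linarith) (ne_of_gt hs0), hsdef, Real.log_sqrt hε.le]
      have : -Real.log ε = |Real.log ε| := (abs_of_neg (by linarith)).symm
      have h3 : Real.log (2 * R) ≤ |Real.log (2 * R)| := le_abs_self _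
      linarith [le_abs_self (Real.log (2 * R))]
    calc (∫ y in Ioi (0 : ℝ), y ^ (N - 1) * f₀ y) ≤ ∫ y, g₁ y := hle1.trans hle2
      _ = 1 + Real.log (2 * R / s) := hval
      _ ≤ 1 + |Real.log (2 * R)| + |Real.log ε| / 2 := by linarith
      _ ≤ C₁ * |Real.log ε| := by
          rw [hC₁def]
          have hA := abs_nonneg (Real.log (2 * R))
          have h5 : 1 + |Real.log (2 * R)| ≤ (1 + |Real.log (2 * R)|) * |Real.log ε| :=
            le_mul_of_one_le_right (by linarith) habslog
          have h6 : (3 / 2 + |Real.log (2 * R)|) * |Real.log ε|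
              = (1 + |Real.log (2 * R)|) * |Real.log ε| + |Real.log ε| / 2 := by ring
          linarith
  calc (∫ x : EuclideanSpace ℝ (Fin N), ‖gradient (v ε) x‖ ^ 2)
      ≤ K * ε ^ q * ∫ x, G x := h1.trans_eq h2
    _ = K * ε ^ q * (cN * ∫ y in Ioi (0 : ℝ), y ^ (N - 1) * f₀ y) := by rw [hradial]
    _ ≤ K * ε ^ q * (cN * (C₁ * |Real.log ε|)) := by
        have h3 : 0 ≤ K * ε ^ q := by positivity
        exact mul_le_mul_of_nonneg_left (mul_le_mul_of_nonneg_left h1d hcN) h3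
    _ ≤ (K * cN * C₁ + 1) * ε ^ q * |Real.log ε| := by
        have h4 : 0 ≤ ε ^ q * |Real.log ε| := by positivity
        have e1 : K * ε ^ q * (cN * (C₁ * |Real.log ε|))
            = K * cN * C₁ * (ε ^ q * |Real.log ε|) := by ring
        have e2 : (K * cN * C₁ + 1) * ε ^ q * |Real.log ε|
            = K * cN * C₁ * (ε ^ q * |Real.log ε|) + ε ^ q * |Real.log ε| := by ring
        rw [e1, e2]
        exact le_add_of_nonneg_right h4
end

section
/- Let N ≥ 3 be an integer, R > 0, and let ξ : ℝ^N → ℝ be a smooth function with 0 ≤ ξ ≤ 1, ξ ≡ 1 on the closed ball of radius R centered at 0, and ξ ≡ 0 outside the ball of radius 2R centered at 0. For ε > 0 define w_ε(x) = (N(N-2)ε)^{(N-2)/8} / (ε + ‖x‖²)^{(N-2)/4} and v_ε = ξ·w_ε, and set 2^* = 2N/(N-2). Let r be a real number with 0 < r < 2^*. Then, as ε → 0⁺, ∫_{ℝ^N} v_ε(x)^{r} dx is Θ(ε^{r(N-2)/8}): there exist constants c₂ ≥ c₁ > 0 and ε₀ > 0 such that c₁ ε^{r(N-2)/8} ≤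 ∫_{ℝ^N} v_ε^{r} dx ≤ c₂ ε^{r(N-2)/8} for all 0 < ε < ε₀. -/
open MeasureTheory Metric ENNReal

lemma aux_singular_finite (N : ℕ) (hN : 3 ≤ N) (S : ℝ) (hS : 0 < S) (p : ℝ)
    (hp0 : 0 < p) (hpN : p < N) :
    ∫⁻ x in closedBall (0 : EuclideanSpace ℝ (Fin N)) S,
      ENNReal.ofReal (‖x‖ ^ (-p)) < ⊤ := by
  set E := EuclideanSpace ℝ (Fin N)
  have hfr : Module.finrank ℝ E = N := finrank_euclideanSpace_fin
  -- dyadic radii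
  set t : ℕ → ℝ := fun k => S * (1/2 : ℝ) ^ k with ht
  have htpos : ∀ k, 0 < t k := fun k => by positivity
  have htsucc : ∀ k, t (k + 1) = t k / 2 := fun k => by
    simp only [ht, pow_succ]; ring
  set A : ℕ → Set E := fun k => closedBall 0 (t k) \ closedBall 0 (t (k + 1)) with hA
  -- remove the origin
  have hzero : (volume : Measure E) {0} = 0 := by
    have : ({0} : Set E) = closedBall 0 0 := by exact Metric.closedBall_zero.symm
    rw [this, Measure.addHaar_closedBall _ _ le_rfl]
    simp [hfr, zero_pow (by omega : N ≠ 0)]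
  have hstep0 : ∫⁻ x in closedBall (0 : E) S, ENNReal.ofReal (‖x‖ ^ (-p))
      = ∫⁻ x in closedBall (0 : E) S \ {0}, ENNReal.ofReal (‖x‖ ^ (-p)) :=
    (setLIntegral_congr (diff_null_ae_eq_self hzero)).symm
  -- covering
  have hcover : closedBall (0 : E) S \ {0} ⊆ ⋃ k, A k := by
    intro x hx
    have hxS : ‖x‖ ≤ S := by simpa [mem_closedBall, dist_zero_right] using hx.1
    have hx0 : 0 < ‖x‖ := by
      have : x ≠ 0 := hx.2
      exact norm_pos_iff.2 this
    have hex : ∃ k, t (k + 1) < ‖x‖ := by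
      obtain ⟨n, hn⟩ := exists_pow_lt_of_lt_one (div_pos hx0 hS) (by norm_num : (1/2:ℝ) < 1)
      refine ⟨n, ?_⟩
      have h1 : ((1:ℝ)/2) ^ (n+1) ≤ (1/2:ℝ) ^ n := by
        rw [pow_succ]
        nlinarith [pow_pos (by norm_num : (0:ℝ) < 1/2) n]
      have : t (n+1) ≤ S * ((1/2:ℝ)^n) := by
        simp only [ht]
        nlinarith
      calc t (n+1) ≤ S * ((1/2:ℝ)^n) := this
        _ < S * (‖x‖ / S) := by nlinarith
        _ = ‖x‖ := by field_simp
    set k := Nat.find hex with hk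
    have hspec : t (k + 1) < ‖x‖ := Nat.find_spec hex
    have hub : ‖x‖ ≤ t k := by
      by_cases h0 : k = 0
      · rw [h0]; simpa [ht] using hxS
      · have hmin := Nat.find_min hex (show k - 1 < Nat.find hex by rw [← hk]; omega)
        push_neg at hmin
        have hke : k - 1 + 1 = k := by omega
        rwa [hke] at hmin
    exact Set.mem_iUnion.2 ⟨k, ⟨by simpa [mem_closedBall, dist_zero_right] using hub,
      by simp [mem_closedBall, dist_zero_right]; linarith⟩⟩
  -- term bound
  set V : ℝ≥0∞ := volume (ball (0 : E) 1) with hV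
  have hVlt : V < ⊤ := measure_ball_lt_top
  set u : ℕ → ℝ := fun k => t (k+1) ^ (-p) * t k ^ N with hu
  have hupos : ∀ k, 0 < u k := fun k => by
    have := htpos k; have := htpos (k+1)
    positivity
  have hterm : ∀ k, ∫⁻ x in A k, ENNReal.ofReal (‖x‖ ^ (-p))
      ≤ ENNReal.ofReal (u k) * V := by
    intro k
    have h1 : ∫⁻ x in A k, ENNReal.ofReal (‖x‖ ^ (-p))
        ≤ ∫⁻ _x in A k, ENNReal.ofReal (t (k+1) ^ (-p)) := by
      refine setLIntegral_mono measurable_const fun x hx => ?_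
      refine ENNReal.ofReal_le_ofReal ?_
      have hxge : t (k+1) ≤ ‖x‖ := by
        have := hx.2
        simp only [mem_closedBall, dist_zero_right, not_le] at this
        exact this.le
      exact Real.rpow_le_rpow_of_nonpos (htpos (k+1)) hxge (by linarith)
    have h2 : (∫⁻ _x in A k, ENNReal.ofReal (t (k+1) ^ (-p)) : ℝ≥0∞)
        = ENNReal.ofReal (t (k+1) ^ (-p)) * volume (A k) := setLIntegral_const _ _
    have h3 : volume (A k) ≤ ENNReal.ofReal (t k ^ N) * V := by
      calc volume (A k) ≤ volume (closedBall (0:E) (t k)) := measure_mono Set.diff_subset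
        _ = ENNReal.ofReal (t k ^ Module.finrank ℝ E) * V :=
            Measure.addHaar_closedBall _ _ (htpos k).le
        _ = ENNReal.ofReal (t k ^ N) * V := by rw [hfr]
    calc ∫⁻ x in A k, ENNReal.ofReal (‖x‖ ^ (-p))
        ≤ ENNReal.ofReal (t (k+1) ^ (-p)) * volume (A k) := h1.trans_eq h2
      _ ≤ ENNReal.ofReal (t (k+1) ^ (-p)) * (ENNReal.ofReal (t k ^ N) * V) :=
          mul_le_mul_right h3 _
      _ = ENNReal.ofReal (u k) * V := by
          rw [← mul_assoc, ← ENNReal.ofReal_mul (Real.rpow_nonneg (htpos (k+1)).le _)]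
  -- geometric decay
  set q : ℝ := (2:ℝ) ^ (p - (N:ℝ)) with hq
  have hqpos : 0 < q := Real.rpow_pos_of_pos two_pos _
  have hq1 : q < 1 := Real.rpow_lt_one_of_one_lt_of_neg one_lt_two (by
    have : (3:ℝ) ≤ (N:ℝ) := by exact_mod_cast hN
    linarith)
  have L : ∀ b : ℝ, 0 < b → (b/2) ^ (-p) = b ^ (-p) * (2:ℝ) ^ p := by
    intro b hb
    rw [Real.div_rpow hb.le (by norm_num : (0:ℝ) ≤ 2),
      Real.rpow_neg (by norm_num : (0:ℝ) ≤ 2)]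
    rw [div_eq_mul_inv, inv_inv]
  have hrec : ∀ k, u (k+1) = u k * q := by
    intro k
    have hq2 : q = (2:ℝ) ^ p / (2:ℝ) ^ (N:ℝ) := Real.rpow_sub two_pos _ _
    have h2Nr : ((2:ℝ) ^ (N:ℝ)) = ((2:ℝ) ^ N : ℝ) := Real.rpow_natCast 2 N
    have h2Npos : (0:ℝ) < (2:ℝ) ^ N := by positivity
    have h4 : t (k+1+1) = t k / 2 / 2 := by rw [htsucc, htsucc]
    have htk := htpos k
    simp only [hu]
    rw [h4, htsucc k, L (t k / 2) (by positivity), div_pow, hq2, h2Nr]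
    field_simp
  have hgeom : ∀ k, u k = u 0 * q ^ k := by
    intro k
    induction k with
    | zero => simp
    | succ n ih => rw [hrec n, ih, pow_succ, mul_assoc]
  -- sum up
  have hsum : ∑' k, (ENNReal.ofReal (u k) * V)
      = ENNReal.ofReal (u 0) * (1 - ENNReal.ofReal q)⁻¹ * V := by
    rw [ENNReal.tsum_mul_right]
    congr 1
    calc ∑' k, ENNReal.ofReal (u k)
        = ∑' k, ENNReal.ofReal (u 0) * ENNReal.ofReal q ^ k := by
          congr 1; funext k
          rw [hgeom k, ENNReal.ofReal_mul (hupos 0).le, ENNReal.ofReal_pow hqpos.le]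
      _ = ENNReal.ofReal (u 0) * (1 - ENNReal.ofReal q)⁻¹ := by
          rw [ENNReal.tsum_mul_left, ENNReal.tsum_geometric]
  have hqlt1 : ENNReal.ofReal q < 1 := by
    rw [← ENNReal.ofReal_one]
    exact ENNReal.ofReal_lt_ofReal_iff_of_nonneg hqpos.le |>.2 hq1
  have hinvlt : (1 - ENNReal.ofReal q)⁻¹ < ⊤ := by
    rw [ENNReal.inv_lt_top]
    exact tsub_pos_of_lt hqlt1
  calc ∫⁻ x in closedBall (0 : E) S, ENNReal.ofReal (‖x‖ ^ (-p))
      = ∫⁻ x in closedBall (0 : E) S \ {0}, ENNReal.ofReal (‖x‖ ^ (-p)) := hstep0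
    _ ≤ ∫⁻ x in ⋃ k, A k, ENNReal.ofReal (‖x‖ ^ (-p)) := lintegral_mono_set hcover
    _ ≤ ∑' k, ∫⁻ x in A k, ENNReal.ofReal (‖x‖ ^ (-p)) := lintegral_iUnion_le _ _
    _ ≤ ∑' k, (ENNReal.ofReal (u k) * V) := ENNReal.tsum_le_tsum hterm
    _ = ENNReal.ofReal (u 0) * (1 - ENNReal.ofReal q)⁻¹ * V := hsum
    _ < ⊤ := by
        exact ENNReal.mul_lt_top (ENNReal.mul_lt_top ENNReal.ofReal_lt_top hinvlt) hVlt

/-- Estimate (4.13), subcritical case `0 < r < 2^*`: with `v_ε = ξ w_ε` the truncated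
square-root instanton, `∫ v_ε^r ≈ ε^(r(N-2)/8)` as `ε → 0⁺`. -/
theorem truncated_instanton_subcritical_integral (N : ℕ) (hN : 3 ≤ N) (R : ℝ) (hR : 0 < R)
    (ξ : EuclideanSpace ℝ (Fin N) → ℝ) (hξ : ContDiff ℝ (⊤ : ℕ∞) ξ)
    (hξ01 : ∀ x, 0 ≤ ξ x ∧ ξ x ≤ 1)
    (hξ1 : ∀ x : EuclideanSpace ℝ (Fin N), ‖x‖ ≤ R → ξ x = 1)
    (hξ0 : ∀ x : EuclideanSpace ℝ (Fin N), 2 * R ≤ ‖x‖ → ξ x = 0)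
    (w v : ℝ → EuclideanSpace ℝ (Fin N) → ℝ)
    (hw : ∀ e : ℝ, 0 < e → ∀ x : EuclideanSpace ℝ (Fin N),
      w e x = ((N : ℝ) * ((N : ℝ) - 2) * e) ^ (((N : ℝ) - 2) / 8) /
        (e + ‖x‖ ^ 2) ^ (((N : ℝ) - 2) / 4))
    (hv : ∀ e : ℝ, ∀ x : EuclideanSpace ℝ (Fin N), v e x = ξ x * w e x)
    (r : ℝ) (hr0 : 0 < r) (hr : r < 2 * (N : ℝ) / ((N : ℝ) - 2)) :
    ∃ c₁ > (0 : ℝ), ∃ c₂ : ℝ, c₁ ≤ c₂ ∧ ∃ ε₀ > (0 : ℝ), ∀ ε : ℝ, 0 < ε → ε < ε₀ →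
      c₁ * ε ^ (r * ((N : ℝ) - 2) / 8) ≤
        (∫ x : EuclideanSpace ℝ (Fin N), v ε x ^ r) ∧
      (∫ x : EuclideanSpace ℝ (Fin N), v ε x ^ r) ≤
        c₂ * ε ^ (r * ((N : ℝ) - 2) / 8) := by
  have hN3 : (3:ℝ) ≤ (N:ℝ) := by exact_mod_cast hN
  have hN2 : (0:ℝ) < (N:ℝ) - 2 := by linarith
  set K : ℝ := (N:ℝ) * ((N:ℝ) - 2) with hKdef
  have hK : 0 < K := by positivity
  set s : ℝ := r * ((N:ℝ) - 2) / 8 with hsdef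
  have hs0 : 0 < s := by positivity
  set β : ℝ := r * ((N:ℝ) - 2) / 4 with hβdef
  have hβ0 : 0 < β := by positivity
  set p : ℝ := r * ((N:ℝ) - 2) / 2 with hpdef
  have hp0 : 0 < p := by positivity
  have hpβ : p = 2 * β := by rw [hpdef, hβdef]; ring
  have hpN : p < (N:ℝ) := by
    rw [lt_div_iff₀ hN2] at hr
    rw [hpdef]; linarith
  -- volume facts
  have hfr : Module.finrank ℝ (EuclideanSpace ℝ (Fin N)) = N := finrank_euclideanSpace_fin
  have hzero : (volume : Measure (EuclideanSpace ℝ (Fin N))) {0} = 0 := by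
    have h : ({0} : Set (EuclideanSpace ℝ (Fin N))) = closedBall 0 0 := by simp
    rw [h, Measure.addHaar_closedBall _ _ le_rfl]
    simp [hfr, zero_pow (by omega : N ≠ 0)]
  have hIfull : ∫⁻ x in closedBall (0 : EuclideanSpace ℝ (Fin N)) (2*R), ENNReal.ofReal (‖x‖ ^ (-p)) < ⊤ :=
    aux_singular_finite N hN (2*R) (by linarith) p hp0 hpN
  set Ifull : ℝ≥0∞ := ∫⁻ x in closedBall (0 : EuclideanSpace ℝ (Fin N)) (2*R), ENNReal.ofReal (‖x‖ ^ (-p))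
    with hIdef
  set M : ℝ := Ifull.toReal with hMdef
  have hM0 : 0 ≤ M := ENNReal.toReal_nonneg
  set VR : ℝ := (volume (closedBall (0 : EuclideanSpace ℝ (Fin N)) R)).toReal with hVRdef
  have hVR0 : 0 < VR := by
    rw [hVRdef]
    exact ENNReal.toReal_pos (measure_closedBall_pos volume 0 hR).ne' measure_closedBall_lt_top.ne
  set cl : ℝ := K ^ s * ((2*R^2) ^ β)⁻¹ with hcldef
  have hcl0 : 0 < cl := by
    have h2 : (0:ℝ) < (2*R^2) ^ β := Real.rpow_pos_of_pos (by positivity) _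
    positivity
  refine ⟨cl * VR, by positivity, max (cl * VR) (K ^ s * M), le_max_left _ _,
    R^2, by positivity, ?_⟩
  intro ε hε hεR
  -- the normalized integrand
  set F : EuclideanSpace ℝ (Fin N) → ℝ := fun x => ξ x ^ r * ((K ^ s * ε ^ s) / (ε + ‖x‖^2) ^ β) with hFdef
  have hF : ∀ x : EuclideanSpace ℝ (Fin N), v ε x ^ r = F x := by
    intro x
    have hD : (0:ℝ) < ε + ‖x‖^2 := by positivity
    have hw' : 0 ≤ (K * ε) ^ (((N:ℝ) - 2) / 8) / (ε + ‖x‖ ^ 2) ^ (((N:ℝ) - 2) / 4) := by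
      positivity
    rw [hv, hw ε hε, Real.mul_rpow (hξ01 x).1 hw',
      Real.div_rpow (Real.rpow_nonneg (by positivity) _) (Real.rpow_nonneg hD.le _),
      ← Real.rpow_mul (by positivity : (0:ℝ) ≤ K * ε), ← Real.rpow_mul hD.le,
      show ((N:ℝ) - 2) / 8 * r = s by rw [hsdef]; ring,
      show ((N:ℝ) - 2) / 4 * r = β by rw [hβdef]; ring,
      Real.mul_rpow hK.le hε.le]
  have hFnn : ∀ x, 0 ≤ F x := by
    intro x
    have hD : (0:ℝ) < ε + ‖x‖^2 := by positivity
    exact mul_nonneg (Real.rpow_nonneg (hξ01 x).1 r) (by positivity)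
  have hcont : Continuous F := by
    have h1 : Continuous fun x : EuclideanSpace ℝ (Fin N) => ξ x ^ r :=
      hξ.continuous.rpow_const (fun x => Or.inr hr0.le)
    have h2 : Continuous fun x : EuclideanSpace ℝ (Fin N) => (ε + ‖x‖^2) ^ β :=
      (continuous_const.add ((continuous_norm).pow 2)).rpow_const (fun x => Or.inr hβ0.le)
    exact h1.mul (continuous_const.div h2
      (fun x => (Real.rpow_pos_of_pos (by positivity) β).ne'))
  have hInt : (∫ x : EuclideanSpace ℝ (Fin N), v ε x ^ r) = (∫⁻ x : EuclideanSpace ℝ (Fin N), ENNReal.ofReal (F x)).toReal := by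
    rw [show (fun x : EuclideanSpace ℝ (Fin N) => v ε x ^ r) = F from funext hF]
    exact integral_eq_lintegral_of_nonneg_ae (Filter.Eventually.of_forall hFnn)
      hcont.aestronglyMeasurable
  set J : ℝ≥0∞ := ∫⁻ x : EuclideanSpace ℝ (Fin N), ENNReal.ofReal (F x) with hJdef
  -- upper bound
  have hsupp : (fun x : EuclideanSpace ℝ (Fin N) => ENNReal.ofReal (F x))
      = (closedBall (0 : EuclideanSpace ℝ (Fin N)) (2*R)).indicator (fun x => ENNReal.ofReal (F x)) := by
    funext x
    by_cases hx : x ∈ closedBall (0 : EuclideanSpace ℝ (Fin N)) (2*R)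
    · rw [Set.indicator_of_mem hx]
    · rw [Set.indicator_of_notMem hx]
      have hxn : 2*R ≤ ‖x‖ := by
        simp only [mem_closedBall, dist_zero_right, not_le] at hx
        linarith
      simp [hFdef, hξ0 x hxn, Real.zero_rpow hr0.ne']
  have hJ1 : J = ∫⁻ x in closedBall (0 : EuclideanSpace ℝ (Fin N)) (2*R), ENNReal.ofReal (F x) := by
    rw [hJdef]
    conv_lhs => rw [hsupp]
    exact lintegral_indicator measurableSet_closedBall _
  have hae : ∀ᵐ x ∂(volume.restrict (closedBall (0 : EuclideanSpace ℝ (Fin N)) (2*R))),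
      ENNReal.ofReal (F x) ≤ ENNReal.ofReal (K^s*ε^s) * ENNReal.ofReal (‖x‖ ^ (-p)) := by
    have h0 : ∀ᵐ x : EuclideanSpace ℝ (Fin N) ∂(volume.restrict (closedBall (0 : EuclideanSpace ℝ (Fin N)) (2*R))), x ≠ (0 : EuclideanSpace ℝ (Fin N)) := by
      refine ae_restrict_of_ae ?_
      rw [ae_iff]
      convert hzero using 2
      ext y; simp
    filter_upwards [h0] with x hx0
    have hxn : (0:ℝ) < ‖x‖ := norm_pos_iff.2 hx0
    have hD : (0:ℝ) < ε + ‖x‖^2 := by positivity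
    have hC : (0:ℝ) ≤ K^s*ε^s := by positivity
    have h1 : (‖x‖:ℝ) ^ p ≤ (ε+‖x‖^2) ^ β := by
      have h2 : ((‖x‖:ℝ)^2) ^ β ≤ (ε+‖x‖^2) ^ β :=
        Real.rpow_le_rpow (by positivity) (by linarith) hβ0.le
      have hsq : (((‖x‖:ℝ)^2) : ℝ) ^ β = ‖x‖ ^ p := by
        rw [← Real.rpow_natCast ‖x‖ 2, ← Real.rpow_mul (norm_nonneg x)]
        congr 1
        rw [hpβ]; norm_num
      rwa [hsq] at h2
    have hreal : F x ≤ (K^s*ε^s) * ‖x‖ ^ (-p) := by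
      calc F x = ξ x ^ r * ((K^s*ε^s) / (ε + ‖x‖^2) ^ β) := rfl
        _ ≤ 1 * ((K^s*ε^s) / (ε + ‖x‖^2) ^ β) := by
            apply mul_le_mul_of_nonneg_right
              (Real.rpow_le_one (hξ01 x).1 (hξ01 x).2 hr0.le) (by positivity)
        _ = (K^s*ε^s) / (ε + ‖x‖^2) ^ β := one_mul _
        _ ≤ (K^s*ε^s) / ‖x‖ ^ p := by
            have hxp : (0:ℝ) < ‖x‖ ^ p := Real.rpow_pos_of_pos hxn p
            gcongr
        _ = (K^s*ε^s) * ‖x‖ ^ (-p) := by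
            rw [Real.rpow_neg (norm_nonneg x), div_eq_mul_inv]
    calc ENNReal.ofReal (F x) ≤ ENNReal.ofReal ((K^s*ε^s) * ‖x‖ ^ (-p)) :=
          ENNReal.ofReal_le_ofReal hreal
      _ = ENNReal.ofReal (K^s*ε^s) * ENNReal.ofReal (‖x‖ ^ (-p)) :=
          ENNReal.ofReal_mul hC
  have hJup : J ≤ ENNReal.ofReal (K^s*ε^s) * Ifull := by
    rw [hJ1, hIdef]
    calc ∫⁻ x in closedBall (0 : EuclideanSpace ℝ (Fin N)) (2*R), ENNReal.ofReal (F x)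
        ≤ ∫⁻ x in closedBall (0 : EuclideanSpace ℝ (Fin N)) (2*R),
            ENNReal.ofReal (K^s*ε^s) * ENNReal.ofReal (‖x‖ ^ (-p)) := lintegral_mono_ae hae
      _ = ENNReal.ofReal (K^s*ε^s) *
            ∫⁻ x in closedBall (0 : EuclideanSpace ℝ (Fin N)) (2*R), ENNReal.ofReal (‖x‖ ^ (-p)) :=
          lintegral_const_mul' _ _ ENNReal.ofReal_ne_top
  have hJtop : J ≠ ⊤ :=
    (lt_of_le_of_lt hJup (ENNReal.mul_lt_top ENNReal.ofReal_lt_top hIfull)).ne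
  have hub : (∫ x : EuclideanSpace ℝ (Fin N), v ε x ^ r) ≤ max (cl * VR) (K ^ s * M) * ε ^ (r * ((N:ℝ) - 2) / 8) := by
    rw [hInt]
    have h1 : J.toReal ≤ (ENNReal.ofReal (K^s*ε^s) * Ifull).toReal :=
      ENNReal.toReal_mono (ENNReal.mul_lt_top ENNReal.ofReal_lt_top hIfull).ne hJup
    have h2 : (ENNReal.ofReal (K^s*ε^s) * Ifull).toReal = K^s*ε^s * M := by
      rw [ENNReal.toReal_mul, ENNReal.toReal_ofReal (by positivity), ← hMdef]
    have h3 : K^s*ε^s * M ≤ max (cl * VR) (K ^ s * M) * ε ^ s := by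
      have : K^s*ε^s*M = (K^s*M) * ε^s := by ring
      rw [this]
      exact mul_le_mul_of_nonneg_right (le_max_right _ _) (Real.rpow_nonneg hε.le _)
    rw [← hsdef]
    exact (h1.trans_eq h2).trans h3
  -- lower bound
  have hlow : cl * VR * ε ^ (r * ((N:ℝ) - 2) / 8) ≤ (∫ x : EuclideanSpace ℝ (Fin N), v ε x ^ r) := by
    rw [hInt, ← hsdef]
    have hptw : ∀ x ∈ closedBall (0 : EuclideanSpace ℝ (Fin N)) R,
        ENNReal.ofReal (cl * ε ^ s) ≤ ENNReal.ofReal (F x) := by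
      intro x hx
      have hxR : ‖x‖ ≤ R := by simpa [mem_closedBall, dist_zero_right] using hx
      have hD : (0:ℝ) < ε + ‖x‖^2 := by positivity
      refine ENNReal.ofReal_le_ofReal ?_
      have hξx : ξ x = 1 := hξ1 x hxR
      have hDle : (ε + ‖x‖^2) ^ β ≤ (2*R^2) ^ β := by
        have hx2 : ‖x‖^2 ≤ R^2 := by nlinarith [norm_nonneg x]
        exact Real.rpow_le_rpow hD.le (by linarith) hβ0.le
      have h2Rpos : (0:ℝ) < (2*R^2) ^ β := Real.rpow_pos_of_pos (by positivity) _
      have hDpos : (0:ℝ) < (ε + ‖x‖^2) ^ β := Real.rpow_pos_of_pos hD _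
      have : cl * ε^s = (K^s * ε^s) / (2*R^2) ^ β := by
        rw [hcldef]; field_simp
      rw [this, hFdef]
      simp only [hξx, Real.one_rpow, one_mul]
      gcongr
    have hchain : ENNReal.ofReal (cl * ε ^ s) * volume (closedBall (0 : EuclideanSpace ℝ (Fin N)) R) ≤ J := by
      calc ENNReal.ofReal (cl * ε ^ s) * volume (closedBall (0 : EuclideanSpace ℝ (Fin N)) R)
          = ∫⁻ _x in closedBall (0 : EuclideanSpace ℝ (Fin N)) R, ENNReal.ofReal (cl * ε ^ s) :=
            (setLIntegral_const _ _).symm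
        _ ≤ ∫⁻ x in closedBall (0 : EuclideanSpace ℝ (Fin N)) R, ENNReal.ofReal (F x) :=
            setLIntegral_mono (hcont.measurable.ennreal_ofReal) hptw
        _ ≤ J := setLIntegral_le_lintegral _ _
    have h1 : (ENNReal.ofReal (cl * ε ^ s) * volume (closedBall (0 : EuclideanSpace ℝ (Fin N)) R)).toReal ≤ J.toReal :=
      ENNReal.toReal_mono hJtop hchain
    have h2 : (ENNReal.ofReal (cl * ε ^ s) * volume (closedBall (0 : EuclideanSpace ℝ (Fin N)) R)).toReal
        = cl * ε ^ s * VR := by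
      rw [ENNReal.toReal_mul, ENNReal.toReal_ofReal (by positivity), ← hVRdef]
    calc cl * VR * ε ^ s = cl * ε ^ s * VR := by ring
      _ ≤ J.toReal := h2 ▸ h1
  exact ⟨hlow, hub⟩
end

section
/- Let N ≥ 3 be an integer, R > 0, and let ξ : ℝ^N → ℝ be a smooth function with 0 ≤ ξ ≤ 1, ξ ≡ 1 on the closed ball of radius R centered at 0, and ξ ≡ 0 outside the ball of radius 2R centered at 0. For ε > 0 define w_ε(x) = (N(N-2)ε)^{(N-2)/8} / (ε + ‖x‖²)^{(N-2)/4} and v_ε = ξ·w_ε, and set 2^* = 2N/(N-2). Then, as ε → 0⁺, ∫_{ℝ^N} v_ε(x)^{2^*} dx is Θ(ε^{N/4} |ln ε|): there exist constants c₂ ≥ c₁ > 0 and ε₀ > 0 such that c₁ ε^{N/4} |ln ε| ≤ ∫_{ℝ^N} v_ε^{2^*} dx ≤ c₂ ε^{N/4} |ln ε| for all 0 < ε < ε₀. -/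
open MeasureTheory Set Real Metric

/-- Two-sided bound for the 1-dimensional radial integral
`∫₀^ρ y^(N-1) (ε+y²)^(-N/2) dy ≈ |log ε|` as `ε → 0⁺`. -/
lemma J_bounds (N : ℕ) (hN : 3 ≤ N) (ρ : ℝ) (hρ : 0 < ρ) :
    ∃ ε₀ > (0:ℝ), ε₀ ≤ 1/2 ∧ ∀ ε : ℝ, 0 < ε → ε < ε₀ →
      (2:ℝ) ^ (-(N:ℝ)/2) / 4 * |Real.log ε| ≤
        (∫ y in Set.Ioo (0:ℝ) ρ, y ^ (N-1) * (ε + y^2) ^ (-(N:ℝ)/2))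
      ∧ (∫ y in Set.Ioo (0:ℝ) ρ, y ^ (N-1) * (ε + y^2) ^ (-(N:ℝ)/2)) ≤ |Real.log ε| := by
  refine ⟨min (min (ρ^2) (1/2)) (Real.exp (-(4 + 4*|Real.log ρ|))), ?_, ?_, ?_⟩
  · positivity
  · exact (min_le_left _ _).trans ((min_le_right _ _))
  intro ε hε hεlt
  have hε1 : ε < 1/2 := lt_of_lt_of_le hεlt ((min_le_left _ _).trans (min_le_right _ _))
  have hερ : ε < ρ^2 := lt_of_lt_of_le hεlt ((min_le_left _ _).trans (min_le_left _ _))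
  have hεexp : ε < Real.exp (-(4 + 4*|Real.log ρ|)) := lt_of_lt_of_le hεlt (min_le_right _ _)
  -- basic facts
  have hlog_neg : Real.log ε < 0 := Real.log_neg hε (by linarith)
  have habs : |Real.log ε| = -Real.log ε := abs_of_neg hlog_neg
  have hlogbig : 4 + 4*|Real.log ρ| < |Real.log ε| := by
    have := Real.log_lt_log hε hεexp
    rw [Real.log_exp] at this; rw [habs]; linarith
  set s := Real.sqrt ε with hs_def
  have hs : s < ρ := by
    have := Real.sqrt_lt_sqrt hε.le hερ
    rwa [Real.sqrt_sq hρ.le] at this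
  have hspos : 0 < s := Real.sqrt_pos.2 hε
  have hs2 : s^2 = ε := Real.sq_sqrt hε.le
  have hlogs : Real.log s = Real.log ε / 2 := Real.log_sqrt hε.le
  set g : ℝ → ℝ := fun y => y ^ (N-1) * (ε + y^2) ^ (-(N:ℝ)/2) with hg_def
  have hden : ∀ y : ℝ, 0 < ε + y^2 := fun y => by positivity
  have hg_cont : Continuous g := by
    apply Continuous.mul (by fun_prop)
    exact (continuous_const.add (continuous_pow 2)).rpow_const
      (fun y => Or.inl (hden y).ne')
  have hg_nonneg : ∀ y, 0 ≤ y → 0 ≤ g y := fun y hy =>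
    mul_nonneg (pow_nonneg hy _) (Real.rpow_nonneg (hden y).le _)
  have hg_int : ∀ a b : ℝ, IntegrableOn g (Set.Ioc a b) :=
    fun a b => (hg_cont.integrableOn_Icc).mono_set Set.Ioc_subset_Icc_self
  have hg_int' : ∀ a b : ℝ, IntegrableOn g (Set.Ioo a b) :=
    fun a b => (hg_cont.integrableOn_Icc).mono_set Set.Ioo_subset_Icc_self
  -- the pointwise bounds on [s, ρ]
  have key : ∀ y ∈ Set.Ioo s ρ, (2:ℝ)^(-(N:ℝ)/2) * y⁻¹ ≤ g y ∧ g y ≤ y⁻¹ := by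
    intro y hy
    have hy0 : 0 < y := hspos.trans hy.1
    have hεy : ε < y^2 := by
      rw [← hs2]; exact pow_lt_pow_left₀ hy.1 hspos.le (by norm_num)
    have hy2 : (y^2 : ℝ) ^ (-(N:ℝ)/2) = y ^ (-(N:ℝ)) := by
      rw [← Real.rpow_natCast y 2, ← Real.rpow_mul hy0.le]
      congr 1; ring
    have hprod : (y:ℝ) ^ (N-1) * y ^ (-(N:ℝ)) = y⁻¹ := by
      rw [← Real.rpow_natCast y (N-1), ← Real.rpow_add hy0]
      have : ((N-1 : ℕ) : ℝ) + (-(N:ℝ)) = -1 := by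
        rw [Nat.cast_sub (by omega)]; push_cast; ring
      rw [this, Real.rpow_neg_one]
    constructor
    · have h1 : (2 * y^2 : ℝ) ^ (-(N:ℝ)/2) ≤ (ε + y^2) ^ (-(N:ℝ)/2) := by
        apply Real.rpow_le_rpow_of_nonpos (hden y) (by nlinarith)
        have : (0:ℝ) ≤ (N:ℝ) := Nat.cast_nonneg N
        linarith
      have h2 : (2 * y^2 : ℝ) ^ (-(N:ℝ)/2) = 2^(-(N:ℝ)/2) * y^(-(N:ℝ)) := by
        rw [Real.mul_rpow (by norm_num) (by positivity), hy2]
      calc (2:ℝ)^(-(N:ℝ)/2) * y⁻¹ = y ^ (N-1) * ((2:ℝ)^(-(N:ℝ)/2) * y^(-(N:ℝ))) := by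
            rw [show y ^ (N-1) * ((2:ℝ)^(-(N:ℝ)/2) * y^(-(N:ℝ)))
                = (2:ℝ)^(-(N:ℝ)/2) * (y ^ (N-1) * y^(-(N:ℝ))) by ring, hprod]
        _ ≤ g y := by
            rw [← h2]
            exact mul_le_mul_of_nonneg_left h1 (pow_nonneg hy0.le _)
    · have h1 : (ε + y^2 : ℝ) ^ (-(N:ℝ)/2) ≤ (y^2 : ℝ) ^ (-(N:ℝ)/2) := by
        apply Real.rpow_le_rpow_of_nonpos (by positivity) (by linarith)
        have : (0:ℝ) ≤ (N:ℝ) := Nat.cast_nonneg N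
        linarith
      calc g y ≤ y ^ (N-1) * (y^2 : ℝ) ^ (-(N:ℝ)/2) :=
            mul_le_mul_of_nonneg_left h1 (pow_nonneg hy0.le _)
        _ = y⁻¹ := by rw [hy2, hprod]
  -- ∫ y in Ioo s ρ, y⁻¹ = log ρ - log ε / 2
  have hinv_int : ∫ y in Set.Ioo s ρ, y⁻¹ = Real.log ρ - Real.log ε / 2 := by
    rw [← MeasureTheory.integral_Ioc_eq_integral_Ioo,
      ← intervalIntegral.integral_of_le hs.le,
      integral_inv (by rw [Set.uIcc_of_le hs.le]; intro h; exact absurd h.1 (by linarith)),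
      Real.log_div hρ.ne' hspos.ne', hlogs]
  have hinv_integrable : IntegrableOn (fun y : ℝ => y⁻¹) (Set.Ioo s ρ) := by
    apply (ContinuousOn.integrableOn_compact isCompact_Icc ?_).mono_set Set.Ioo_subset_Icc_self
    exact ContinuousOn.inv₀ continuousOn_id (fun y hy => by
      have := hy.1; intro h; rw [h] at this; exact absurd this (not_le.2 hspos))
  have hconst_inv_integrable : IntegrableOn (fun y : ℝ => (2:ℝ)^(-(N:ℝ)/2) * y⁻¹) (Set.Ioo s ρ) :=
    hinv_integrable.const_mul _
  constructor
  · -- lower bound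
    have step1 : ∫ y in Set.Ioo s ρ, g y ≤ ∫ y in Set.Ioo (0:ℝ) ρ, g y := by
      apply setIntegral_mono_set (hg_int' 0 ρ)
      · filter_upwards [ae_restrict_mem measurableSet_Ioo] with y hy
        exact hg_nonneg y hy.1.le
      · exact Filter.Eventually.of_forall (Set.Ioo_subset_Ioo hspos.le le_rfl)
    have step2 : ∫ y in Set.Ioo s ρ, (2:ℝ)^(-(N:ℝ)/2) * y⁻¹ ≤ ∫ y in Set.Ioo s ρ, g y := by
      apply setIntegral_mono_on hconst_inv_integrable (hg_int' s ρ) measurableSet_Ioo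
      exact fun y hy => (key y hy).1
    have step3 : ∫ y in Set.Ioo s ρ, (2:ℝ)^(-(N:ℝ)/2) * y⁻¹
        = (2:ℝ)^(-(N:ℝ)/2) * (Real.log ρ - Real.log ε / 2) := by
      rw [integral_const_mul, hinv_int]
    have hfinal : (2:ℝ)^(-(N:ℝ)/2)/4 * |Real.log ε| ≤
        (2:ℝ)^(-(N:ℝ)/2) * (Real.log ρ - Real.log ε / 2) := by
      have h2pos : (0:ℝ) < (2:ℝ)^(-(N:ℝ)/2) := Real.rpow_pos_of_pos (by norm_num) _
      have hlρ : -|Real.log ρ| ≤ Real.log ρ := neg_abs_le _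
      have : |Real.log ε| / 4 ≤ Real.log ρ - Real.log ε / 2 := by
        rw [habs] at hlogbig ⊢; linarith
      calc (2:ℝ)^(-(N:ℝ)/2)/4 * |Real.log ε| = (2:ℝ)^(-(N:ℝ)/2) * (|Real.log ε|/4) := by ring
        _ ≤ _ := mul_le_mul_of_nonneg_left this h2pos.le
    linarith [hfinal, step3 ▸ step2, step1]
  · -- upper bound
    have hsplit : Set.Ioo (0:ℝ) ρ = Set.Ioc 0 s ∪ Set.Ioo s ρ :=
      (Set.Ioc_union_Ioo_eq_Ioo hspos.le hs).symm
    have hdisj : Disjoint (Set.Ioc (0:ℝ) s) (Set.Ioo s ρ) :=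
      Set.disjoint_left.mpr (fun x hx hx' => absurd hx.2 (not_le.mpr hx'.1))
    rw [hsplit, MeasureTheory.setIntegral_union hdisj measurableSet_Ioo (hg_int 0 s) (hg_int' s ρ)]
    -- piece 1 ≤ 1/N
    have hpiece1 : ∫ y in Set.Ioc (0:ℝ) s, g y ≤ 1 := by
      have hb : ∀ y ∈ Set.Ioc (0:ℝ) s, g y ≤ y ^ (N-1) * ε ^ (-(N:ℝ)/2) := by
        intro y hy
        apply mul_le_mul_of_nonneg_left _ (pow_nonneg hy.1.le _)
        apply Real.rpow_le_rpow_of_nonpos hε (by nlinarith [sq_nonneg y])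
        have : (0:ℝ) ≤ (N:ℝ) := Nat.cast_nonneg N
        linarith
      have hbi : IntegrableOn (fun y : ℝ => y ^ (N-1) * ε ^ (-(N:ℝ)/2)) (Set.Ioc (0:ℝ) s) := by
        apply ((continuous_pow (N-1)).mul continuous_const).integrableOn_Icc.mono_set
          Set.Ioc_subset_Icc_self
      have h1 : ∫ y in Set.Ioc (0:ℝ) s, g y
          ≤ ∫ y in Set.Ioc (0:ℝ) s, y ^ (N-1) * ε ^ (-(N:ℝ)/2) :=
        setIntegral_mono_on (hg_int 0 s) hbi measurableSet_Ioc hb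
      have hNn : N - 1 + 1 = N := by omega
      have h2 : ∫ y in Set.Ioc (0:ℝ) s, (y:ℝ) ^ (N-1) * ε ^ (-(N:ℝ)/2)
          = s^N / N * ε ^ (-(N:ℝ)/2) := by
        rw [← intervalIntegral.integral_of_le hspos.le,
          intervalIntegral.integral_mul_const, integral_pow, hNn,
          zero_pow (by omega : N ≠ 0), sub_zero]
        have hcast : ((N - 1 : ℕ) : ℝ) + 1 = N := by
          rw [Nat.cast_sub (by omega)]; push_cast; ring
        rw [hcast]
      have h3 : s^N / N * ε ^ (-(N:ℝ)/2) = 1/N := by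
        have hsN : (s:ℝ)^N = ε ^ ((N:ℝ)/2) := by
          rw [hs_def, Real.sqrt_eq_rpow, ← Real.rpow_natCast (ε ^ (1/2 : ℝ)) N,
            ← Real.rpow_mul hε.le]
          ring_nf
        rw [hsN, div_mul_eq_mul_div, ← Real.rpow_add hε,
          show (N:ℝ)/2 + -(N:ℝ)/2 = 0 by ring, Real.rpow_zero]
      have hN1 : (1:ℝ)/N ≤ 1 := by
        rw [div_le_one (by positivity)]
        exact_mod_cast Nat.one_le_iff_ne_zero.mpr (by omega)
      rw [h2, h3] at h1; linarith
    -- piece 2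
    have hpiece2 : ∫ y in Set.Ioo s ρ, g y ≤ Real.log ρ - Real.log ε / 2 := by
      rw [← hinv_int]
      exact setIntegral_mono_on (hg_int' s ρ) hinv_integrable measurableSet_Ioo
        (fun y hy => (key y hy).2)
    have : Real.log ρ ≤ |Real.log ρ| := le_abs_self _
    rw [habs] at hlogbig ⊢
    linarith

/-- Polar coordinates for the radial integrand over a ball in `ℝ^N`. -/
lemma polar_ball (N : ℕ) (hN : 3 ≤ N) (ρ ε : ℝ) :
    ∫ x in Metric.ball (0 : EuclideanSpace ℝ (Fin N)) ρ, (ε + ‖x‖^2) ^ (-(N:ℝ)/2)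
    = ((N : ℝ) * (volume (Metric.ball (0 : EuclideanSpace ℝ (Fin N)) 1)).toReal) *
        ∫ y in Set.Ioo (0:ℝ) ρ, y ^ (N-1) * (ε + y^2) ^ (-(N:ℝ)/2) := by
  haveI : Nonempty (Fin N) := ⟨⟨0, by omega⟩⟩
  haveI : Nontrivial (EuclideanSpace ℝ (Fin N)) := inferInstance
  have hdim : Module.finrank ℝ (EuclideanSpace ℝ (Fin N)) = N := finrank_euclideanSpace_fin
  set h : ℝ → ℝ := fun y => (ε + y^2) ^ (-(N:ℝ)/2) with hh
  set f : ℝ → ℝ := Set.indicator (Set.Iio ρ) h with hf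
  have lhs_eq : ∫ x in Metric.ball (0 : EuclideanSpace ℝ (Fin N)) ρ, (ε + ‖x‖^2) ^ (-(N:ℝ)/2)
      = ∫ x : EuclideanSpace ℝ (Fin N), f ‖x‖ := by
    rw [← integral_indicator measurableSet_ball]
    congr 1
    funext x
    by_cases hx : ‖x‖ < ρ
    · rw [Set.indicator_of_mem (mem_ball_zero_iff.2 hx),
        hf, Set.indicator_of_mem (Set.mem_Iio.2 hx)]
    · rw [Set.indicator_of_notMem (fun hm => hx (mem_ball_zero_iff.1 hm)),
        hf, Set.indicator_of_notMem (fun hm => hx (Set.mem_Iio.1 hm))]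
  rw [lhs_eq, integral_fun_norm_addHaar volume f, hdim, nsmul_eq_mul, smul_eq_mul]
  have hind : ∀ y : ℝ, y ^ (N-1) • f y
      = Set.indicator (Set.Iio ρ) (fun y => y ^ (N-1) * h y) y := by
    intro y
    simp [hf, Set.indicator_apply, mul_ite, smul_eq_mul]
  rw [show (∫ y in Set.Ioi (0:ℝ), y ^ (N-1) • f y)
      = ∫ y in Set.Ioi (0:ℝ), Set.indicator (Set.Iio ρ) (fun y => y ^ (N-1) * h y) y
      from integral_congr_ae (Filter.Eventually.of_forall fun y => hind y),
    setIntegral_indicator measurableSet_Iio, Set.Ioi_inter_Iio, mul_assoc]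
  rfl

/-- Estimate (4.13), borderline case `r = 2^*`: with `v_ε = ξ w_ε` the truncated
square-root instanton, `∫ v_ε^(2^*) ≈ ε^(N/4) |ln ε|` as `ε → 0⁺`. -/
theorem truncated_instanton_borderline_integral (N : ℕ) (hN : 3 ≤ N) (R : ℝ) (hR : 0 < R)
    (ξ : EuclideanSpace ℝ (Fin N) → ℝ) (hξ : ContDiff ℝ (⊤ : ℕ∞) ξ)
    (hξ01 : ∀ x, 0 ≤ ξ x ∧ ξ x ≤ 1)
    (hξ1 : ∀ x : EuclideanSpace ℝ (Fin N), ‖x‖ ≤ R → ξ x = 1)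
    (hξ0 : ∀ x : EuclideanSpace ℝ (Fin N), 2 * R ≤ ‖x‖ → ξ x = 0)
    (w v : ℝ → EuclideanSpace ℝ (Fin N) → ℝ)
    (hw : ∀ e : ℝ, 0 < e → ∀ x : EuclideanSpace ℝ (Fin N),
      w e x = ((N : ℝ) * ((N : ℝ) - 2) * e) ^ (((N : ℝ) - 2) / 8) /
        (e + ‖x‖ ^ 2) ^ (((N : ℝ) - 2) / 4))
    (hv : ∀ e : ℝ, ∀ x : EuclideanSpace ℝ (Fin N), v e x = ξ x * w e x) :
    ∃ c₁ > (0 : ℝ), ∃ c₂ : ℝ, c₁ ≤ c₂ ∧ ∃ ε₀ > (0 : ℝ), ∀ ε : ℝ, 0 < ε → ε < ε₀ →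
      c₁ * ε ^ ((N : ℝ) / 4) * |Real.log ε| ≤
        (∫ x : EuclideanSpace ℝ (Fin N), v ε x ^ (2 * (N : ℝ) / ((N : ℝ) - 2))) ∧
      (∫ x : EuclideanSpace ℝ (Fin N), v ε x ^ (2 * (N : ℝ) / ((N : ℝ) - 2))) ≤
        c₂ * ε ^ ((N : ℝ) / 4) * |Real.log ε| := by
  haveI : Nonempty (Fin N) := ⟨⟨0, by omega⟩⟩
  set p : ℝ := 2 * (N : ℝ) / ((N : ℝ) - 2) with hp_def
  have hN3 : (3:ℝ) ≤ (N:ℝ) := by exact_mod_cast hN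
  have hN2 : (0:ℝ) < (N:ℝ) - 2 := by linarith
  have hp : 0 < p := by positivity
  set K : ℝ := ((N:ℝ) * ((N:ℝ) - 2)) ^ ((N:ℝ)/4) with hK_def
  have hK : 0 < K := Real.rpow_pos_of_pos (by positivity) _
  set S : ℝ := (N : ℝ) * (volume (Metric.ball (0 : EuclideanSpace ℝ (Fin N)) 1)).toReal with hS_def
  have hS : 0 < S := by
    apply mul_pos (by positivity)
    apply ENNReal.toReal_pos
    · exact (measure_ball_pos volume _ one_pos).ne'
    · exact measure_ball_lt_top.ne
  obtain ⟨εR, hεR, hεR2, hJR⟩ := J_bounds N hN R hR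
  obtain ⟨ε3R, hε3R, hε3R2, hJ3R⟩ := J_bounds N hN (3*R) (by linarith)
  refine ⟨K * S * ((2:ℝ) ^ (-(N:ℝ)/2) / 4), by positivity, K * S, ?_, min εR ε3R,
    lt_min hεR hε3R, ?_⟩
  · have h21 : (2:ℝ) ^ (-(N:ℝ)/2) ≤ 1 :=
      Real.rpow_le_one_of_one_le_of_nonpos (by norm_num)
        (by rw [neg_div]; simp; positivity)
    nlinarith [mul_pos hK hS]
  intro ε hε hεlt
  have hεltR : ε < εR := lt_of_lt_of_le hεlt (min_le_left _ _)
  have hεlt3R : ε < ε3R := lt_of_lt_of_le hεlt (min_le_right _ _)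
  -- pointwise formula for w^p
  have hB : ∀ x : EuclideanSpace ℝ (Fin N), (0:ℝ) < ε + ‖x‖^2 := fun x => by positivity
  have hwpos : ∀ x : EuclideanSpace ℝ (Fin N), 0 < w ε x := by
    intro x
    rw [hw ε hε x]
    exact div_pos (Real.rpow_pos_of_pos (by positivity) _)
      (Real.rpow_pos_of_pos (hB x) _)
  have hwp : ∀ x : EuclideanSpace ℝ (Fin N), w ε x ^ p = (K * ε ^ ((N:ℝ)/4)) * (ε + ‖x‖^2) ^ (-(N:ℝ)/2) := by
    intro x
    have hA : (0:ℝ) < (N:ℝ) * ((N:ℝ)-2) * ε := by positivity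
    rw [hw ε hε x, Real.div_rpow (Real.rpow_nonneg hA.le _) (Real.rpow_nonneg (hB x).le _),
      ← Real.rpow_mul hA.le, ← Real.rpow_mul (hB x).le]
    have e1 : ((N:ℝ)-2)/8 * p = (N:ℝ)/4 := by
      rw [hp_def]; field_simp; ring
    have e2 : ((N:ℝ)-2)/4 * p = (N:ℝ)/2 := by
      rw [hp_def]; field_simp; ring
    rw [e1, e2, Real.mul_rpow (by positivity) hε.le,
      show -(N:ℝ)/2 = -((N:ℝ)/2) by ring, Real.rpow_neg (hB x).le, div_eq_mul_inv, hK_def]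
  -- basic properties of v
  have hv0 : ∀ x, 0 ≤ v ε x := fun x => by
    rw [hv ε x]; exact mul_nonneg (hξ01 x).1 (hwpos x).le
  have hvw : ∀ x, v ε x ≤ w ε x := fun x => by
    rw [hv ε x]; exact mul_le_of_le_one_left (hwpos x).le (hξ01 x).2
  have hw_cont : Continuous (w ε) := by
    have heq : w ε = fun x => ((N:ℝ)*((N:ℝ)-2)*ε) ^ (((N:ℝ)-2)/8) /
        (ε + ‖x‖^2) ^ (((N:ℝ)-2)/4) := funext (hw ε hε)
    rw [heq]
    apply Continuous.div continuous_const
    · exact (continuous_const.add ((continuous_norm).pow 2)).rpow_const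
        (fun x => Or.inl (hB x).ne')
    · exact fun x => (Real.rpow_pos_of_pos (hB x) _).ne'
  have hv_cont : Continuous (fun x => v ε x ^ p) := by
    have heq : (fun x => v ε x ^ p) = fun x => (ξ x * w ε x) ^ p := by
      funext x; rw [hv ε x]
    rw [heq]
    exact (hξ.continuous.mul hw_cont).rpow_const (fun x => Or.inr hp.le)
  have hvp0 : ∀ x : EuclideanSpace ℝ (Fin N), 2*R ≤ ‖x‖ → v ε x ^ p = 0 := by
    intro x hx
    rw [hv ε x, hξ0 x hx, zero_mul, Real.zero_rpow hp.ne']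
  have hint : Integrable (fun x : EuclideanSpace ℝ (Fin N) => v ε x ^ p) := by
    apply hv_cont.integrable_of_hasCompactSupport
    apply HasCompactSupport.intro
      (isCompact_closedBall (0 : EuclideanSpace ℝ (Fin N)) (2*R))
    intro x hx
    have h2R : 2*R < ‖x‖ := by
      simpa [Metric.mem_closedBall, dist_zero_right, not_le] using hx
    exact hvp0 x h2R.le
  -- lower bound
  have hlow : (K * S * ((2:ℝ)^(-(N:ℝ)/2)/4)) * ε ^ ((N:ℝ)/4) * |Real.log ε|
      ≤ ∫ x : EuclideanSpace ℝ (Fin N), v ε x ^ p := by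
    have hball_eqR : ∫ x in Metric.ball (0:EuclideanSpace ℝ (Fin N)) R, v ε x ^ p
        = (K * ε ^ ((N:ℝ)/4)) *
          ∫ x in Metric.ball (0:EuclideanSpace ℝ (Fin N)) R, (ε + ‖x‖^2) ^ (-(N:ℝ)/2) := by
      rw [← integral_const_mul]
      apply setIntegral_congr_fun measurableSet_ball
      intro x hx
      show v ε x ^ p = (K * ε ^ ((N:ℝ)/4)) * (ε + ‖x‖^2) ^ (-(N:ℝ)/2)
      rw [hv ε x, hξ1 x (mem_ball_zero_iff.1 hx).le, one_mul]
      exact hwp x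
    have h1 : ∫ x in Metric.ball (0:EuclideanSpace ℝ (Fin N)) R, v ε x ^ p
        ≤ ∫ x : EuclideanSpace ℝ (Fin N), v ε x ^ p :=
      setIntegral_le_integral hint (Filter.Eventually.of_forall fun x =>
        Real.rpow_nonneg (hv0 x) p)
    rw [hball_eqR, polar_ball N hN R ε, ← hS_def] at h1
    have h2 := (hJR ε hε hεltR).1
    calc (K * S * ((2:ℝ)^(-(N:ℝ)/2)/4)) * ε ^ ((N:ℝ)/4) * |Real.log ε|
        = (K * ε ^ ((N:ℝ)/4) * S) * ((2:ℝ)^(-(N:ℝ)/2)/4 * |Real.log ε|) := by ring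
      _ ≤ (K * ε ^ ((N:ℝ)/4) * S) *
          ∫ y in Set.Ioo (0:ℝ) R, y ^ (N-1) * (ε + y^2) ^ (-(N:ℝ)/2) :=
          mul_le_mul_of_nonneg_left h2 (by positivity)
      _ = (K * ε ^ ((N:ℝ)/4)) *
          (S * ∫ y in Set.Ioo (0:ℝ) R, y ^ (N-1) * (ε + y^2) ^ (-(N:ℝ)/2)) := by ring
      _ ≤ _ := h1
  -- upper bound
  have hup : (∫ x : EuclideanSpace ℝ (Fin N), v ε x ^ p)
      ≤ (K * S) * ε ^ ((N:ℝ)/4) * |Real.log ε| := by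
    set F : EuclideanSpace ℝ (Fin N) → ℝ :=
      fun x => (K * ε ^ ((N:ℝ)/4)) * (ε + ‖x‖^2) ^ (-(N:ℝ)/2) with hF
    have hF_cont : Continuous F :=
      continuous_const.mul ((continuous_const.add (continuous_norm.pow 2)).rpow_const
        (fun x => Or.inl (hB x).ne'))
    have hF_int : IntegrableOn F (Metric.ball (0:EuclideanSpace ℝ (Fin N)) (3*R)) :=
      (hF_cont.continuousOn.integrableOn_compact (isCompact_closedBall _ _)).mono_set
        Metric.ball_subset_closedBall
    have hle : ∀ x, v ε x ^ p
        ≤ Set.indicator (Metric.ball (0:EuclideanSpace ℝ (Fin N)) (3*R)) F x := by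
      intro x
      by_cases hx : x ∈ Metric.ball (0:EuclideanSpace ℝ (Fin N)) (3*R)
      · rw [Set.indicator_of_mem hx]
        calc v ε x ^ p ≤ w ε x ^ p := Real.rpow_le_rpow (hv0 x) (hvw x) hp.le
          _ = F x := hwp x
      · rw [Set.indicator_of_notMem hx]
        have hx3 : 3*R ≤ ‖x‖ := by
          simpa [Metric.mem_ball, dist_zero_right, not_lt] using hx
        rw [hvp0 x (by linarith)]
    have hind_int : Integrable
        (Set.indicator (Metric.ball (0:EuclideanSpace ℝ (Fin N)) (3*R)) F) :=
      (integrable_indicator_iff measurableSet_ball).2 hF_int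
    have h1 : (∫ x : EuclideanSpace ℝ (Fin N), v ε x ^ p)
        ≤ ∫ x, Set.indicator (Metric.ball (0:EuclideanSpace ℝ (Fin N)) (3*R)) F x :=
      integral_mono hint hind_int hle
    rw [integral_indicator measurableSet_ball, hF, integral_const_mul,
      polar_ball N hN (3*R) ε, ← hS_def] at h1
    have h2 := (hJ3R ε hε hεlt3R).2
    calc (∫ x : EuclideanSpace ℝ (Fin N), v ε x ^ p)
        ≤ (K * ε ^ ((N:ℝ)/4)) *
          (S * ∫ y in Set.Ioo (0:ℝ) (3*R), y ^ (N-1) * (ε + y^2) ^ (-(N:ℝ)/2)) := h1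
      _ = (K * ε ^ ((N:ℝ)/4) * S) *
          ∫ y in Set.Ioo (0:ℝ) (3*R), y ^ (N-1) * (ε + y^2) ^ (-(N:ℝ)/2) := by ring
      _ ≤ (K * ε ^ ((N:ℝ)/4) * S) * |Real.log ε| :=
          mul_le_mul_of_nonneg_left h2 (by positivity)
      _ = (K * S) * ε ^ ((N:ℝ)/4) * |Real.log ε| := by ring
  exact ⟨hlow, hup⟩
end

section
/- Let N ≥ 3 be an integer, R > 0, and let ξ : ℝ^N → ℝ be a smooth function with 0 ≤ ξ ≤ 1, ξ ≡ 1 on the closed ball of radius R centered at 0, and ξ ≡ 0 outside the ball of radius 2R centered at 0. For ε > 0 define w_ε(x) = (N(N-2)ε)^{(N-2)/8} / (ε + ‖x‖²)^{(N-2)/4} and v_ε = ξ·w_ε, and set 2^* = 2N/(N-2). Let r be a real number with 2^* < r < 2·2^*. Then, as ε → 0⁺, ∫_{ℝ^N} v_ε(x)^{r} dx is Θ(ε^{N/2 - r(N-2)/8}): there exist constants c₂ ≥ c₁ > 0 and ε₀ > 0 such that c₁ ε^{N/2 - r(N-2)/8} ≤ ∫_{ℝ^N} v_ε^{r} dx ≤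 c₂ ε^{N/2 - r(N-2)/8} for all 0 < ε < ε₀. -/
open MeasureTheory Metric Real

section Aux

variable {N : ℕ}

local notation "EN" => EuclideanSpace ℝ (Fin N)

lemma aux_sqrt_pow {ε : ℝ} (hε : 0 < ε) : Real.sqrt ε ^ N = ε ^ ((N : ℝ) / 2) := by
  rw [Real.sqrt_eq_rpow, ← Real.rpow_natCast (ε ^ (1 / 2 : ℝ)) N,
    ← Real.rpow_mul hε.le]
  congr 1
  ring

lemma aux_integrable {p : ℝ} (hp : (N : ℝ) < 2 * p) :
    Integrable (fun y : EN => ((1 : ℝ) + ‖y‖ ^ 2) ^ (-p)) := by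
  have h := integrable_rpow_neg_one_add_norm_sq (E := EN) (μ := volume)
    (r := 2 * p) (by rwa [finrank_euclideanSpace_fin])
  have : -(2 * p) / 2 = -p := by ring
  rwa [this] at h

/-- Scaling identity for the model integral. -/
lemma aux_scaling (p : ℝ) {ε : ℝ} (hε : 0 < ε) :
    (∫ x : EN, (ε + ‖x‖ ^ 2) ^ (-p)) =
      ε ^ ((N : ℝ) / 2 - p) * ∫ y : EN, ((1 : ℝ) + ‖y‖ ^ 2) ^ (-p) := by
  have hc : (0 : ℝ) < Real.sqrt ε := Real.sqrt_pos.2 hε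
  set c : ℝ := (Real.sqrt ε)⁻¹ with hcdef
  have hc0 : 0 < c := inv_pos.2 hc
  have hsq : Real.sqrt ε ^ 2 = ε := Real.sq_sqrt hε.le
  have hpt : ∀ x : EN, ((1 : ℝ) + ‖c • x‖ ^ 2) ^ (-p) = ε ^ p * (ε + ‖x‖ ^ 2) ^ (-p) := by
    intro x
    have hnorm : ‖c • x‖ ^ 2 = ε⁻¹ * ‖x‖ ^ 2 := by
      rw [norm_smul, Real.norm_eq_abs, abs_of_pos hc0, mul_pow, hcdef, inv_pow, hsq]
    have hbase : (1 : ℝ) + ‖c • x‖ ^ 2 = ε⁻¹ * (ε + ‖x‖ ^ 2) := by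
      rw [hnorm, mul_add, mul_comm ε⁻¹ ε, mul_inv_cancel₀ hε.ne']
    rw [hbase, Real.mul_rpow (inv_nonneg.2 hε.le) (by positivity),
      Real.inv_rpow hε.le, Real.rpow_neg hε.le, inv_inv]
  have h1 : (∫ x : EN, ((1 : ℝ) + ‖c • x‖ ^ 2) ^ (-p)) =
      |(c ^ Module.finrank ℝ EN)⁻¹| • ∫ y : EN, ((1 : ℝ) + ‖y‖ ^ 2) ^ (-p) :=
    Measure.integral_comp_smul volume (fun y : EN => ((1 : ℝ) + ‖y‖ ^ 2) ^ (-p)) c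
  have habs : |(c ^ Module.finrank ℝ EN)⁻¹| = ε ^ ((N : ℝ) / 2) := by
    rw [finrank_euclideanSpace_fin, hcdef, inv_pow, inv_inv,
      abs_of_nonneg (pow_nonneg (Real.sqrt_nonneg ε) N), aux_sqrt_pow hε]
  simp_rw [hpt] at h1
  rw [integral_const_mul, habs, smul_eq_mul] at h1
  calc (∫ x : EN, (ε + ‖x‖ ^ 2) ^ (-p))
      = ε ^ (-p) * (ε ^ p * ∫ x : EN, (ε + ‖x‖ ^ 2) ^ (-p)) := by
        rw [← mul_assoc, ← Real.rpow_add hε, neg_add_cancel, Real.rpow_zero, one_mul]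
    _ = ε ^ (-p) * (ε ^ ((N : ℝ) / 2) * ∫ y : EN, ((1 : ℝ) + ‖y‖ ^ 2) ^ (-p)) := by rw [h1]
    _ = ε ^ ((N : ℝ) / 2 - p) * ∫ y : EN, ((1 : ℝ) + ‖y‖ ^ 2) ^ (-p) := by
        rw [← mul_assoc, ← Real.rpow_add hε]
        congr 2
        ring

lemma aux_integrable' {p : ℝ} (hp : (N : ℝ) < 2 * p) {ε : ℝ} (hε : 0 < ε) :
    Integrable (fun x : EN => (ε + ‖x‖ ^ 2) ^ (-p)) := by
  have hc : (0 : ℝ) < Real.sqrt ε := Real.sqrt_pos.2 hε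
  set c : ℝ := (Real.sqrt ε)⁻¹ with hcdef
  have hc0 : 0 < c := inv_pos.2 hc
  have h := ((aux_integrable (N := N) hp).comp_smul hc0.ne').const_mul (ε ^ (-p))
  refine h.congr (Filter.Eventually.of_forall fun x => ?_)
  have hsq : Real.sqrt ε ^ 2 = ε := Real.sq_sqrt hε.le
  have hnorm : ‖c • x‖ ^ 2 = ε⁻¹ * ‖x‖ ^ 2 := by
    rw [norm_smul, Real.norm_eq_abs, abs_of_pos hc0, mul_pow, hcdef, inv_pow, hsq]
  have hbase : (1 : ℝ) + ‖c • x‖ ^ 2 = ε⁻¹ * (ε + ‖x‖ ^ 2) := by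
    rw [hnorm, mul_add, mul_comm ε⁻¹ ε, mul_inv_cancel₀ hε.ne']
  show ε ^ (-p) * ((1 : ℝ) + ‖c • x‖ ^ 2) ^ (-p) = (ε + ‖x‖ ^ 2) ^ (-p)
  rw [hbase, Real.mul_rpow (inv_nonneg.2 hε.le) (by positivity),
    Real.inv_rpow hε.le, Real.rpow_neg hε.le, inv_inv, ← mul_assoc,
    inv_mul_cancel₀ (Real.rpow_pos_of_pos hε p).ne', one_mul]

end Aux

/-- Estimate (4.13), supercritical case `2^* < r < 2·2^*`: with `v_ε = ξ w_ε` the truncated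
square-root instanton, `∫ v_ε^r ≈ ε^(N/2 - r(N-2)/8)` as `ε → 0⁺`. -/
theorem truncated_instanton_supercritical_integral (N : ℕ) (hN : 3 ≤ N) (R : ℝ) (hR : 0 < R)
    (ξ : EuclideanSpace ℝ (Fin N) → ℝ) (hξ : ContDiff ℝ (⊤ : ℕ∞) ξ)
    (hξ01 : ∀ x, 0 ≤ ξ x ∧ ξ x ≤ 1)
    (hξ1 : ∀ x : EuclideanSpace ℝ (Fin N), ‖x‖ ≤ R → ξ x = 1)
    (hξ0 : ∀ x : EuclideanSpace ℝ (Fin N), 2 * R ≤ ‖x‖ → ξ x = 0)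
    (w v : ℝ → EuclideanSpace ℝ (Fin N) → ℝ)
    (hw : ∀ e : ℝ, 0 < e → ∀ x : EuclideanSpace ℝ (Fin N),
      w e x = ((N : ℝ) * ((N : ℝ) - 2) * e) ^ (((N : ℝ) - 2) / 8) /
        (e + ‖x‖ ^ 2) ^ (((N : ℝ) - 2) / 4))
    (hv : ∀ e : ℝ, ∀ x : EuclideanSpace ℝ (Fin N), v e x = ξ x * w e x)
    (r : ℝ) (hr0 : 2 * (N : ℝ) / ((N : ℝ) - 2) < r)
    (hr : r < 2 * (2 * (N : ℝ) / ((N : ℝ) - 2))) :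
    ∃ c₁ > (0 : ℝ), ∃ c₂ : ℝ, c₁ ≤ c₂ ∧ ∃ ε₀ > (0 : ℝ), ∀ ε : ℝ, 0 < ε → ε < ε₀ →
      c₁ * ε ^ ((N : ℝ) / 2 - r * ((N : ℝ) - 2) / 8) ≤
        (∫ x : EuclideanSpace ℝ (Fin N), v ε x ^ r) ∧
      (∫ x : EuclideanSpace ℝ (Fin N), v ε x ^ r) ≤
        c₂ * ε ^ ((N : ℝ) / 2 - r * ((N : ℝ) - 2) / 8) := by
  haveI : Nontrivial (EuclideanSpace ℝ (Fin N)) := by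
    refine Module.nontrivial_of_finrank_pos (R := ℝ) ?_
    rw [finrank_euclideanSpace_fin]; omega
  have hN2 : (0 : ℝ) < (N : ℝ) - 2 := by
    have : (3 : ℝ) ≤ N := by exact_mod_cast hN
    linarith
  have hNpos : (0 : ℝ) < N := by positivity
  have hrpos : 0 < r := lt_trans (by positivity) hr0
  set p : ℝ := r * ((N : ℝ) - 2) / 4 with hpdef
  set b : ℝ := ((N : ℝ) - 2) / 8 * r with hbdef
  set τ : ℝ := (N : ℝ) / 2 - r * ((N : ℝ) - 2) / 8 with hτdef
  have hp : (N : ℝ) < 2 * p := by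
    rw [hpdef]
    rw [div_lt_iff₀ hN2] at hr0
    nlinarith
  have hppos : 0 < p := by nlinarith
  have hbpos : 0 < b := by rw [hbdef]; positivity
  set K : ℝ := (N : ℝ) * ((N : ℝ) - 2) with hKdef
  have hK : 0 < K := by positivity
  set J : ℝ := ∫ y : EuclideanSpace ℝ (Fin N), ((1 : ℝ) + ‖y‖ ^ 2) ^ (-p) with hJdef
  have hJint : Integrable (fun y : EuclideanSpace ℝ (Fin N) => ((1 : ℝ) + ‖y‖ ^ 2) ^ (-p)) :=
    aux_integrable hp
  set B : ℝ := (volume (ball (0 : EuclideanSpace ℝ (Fin N)) 1)).toReal with hBdef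
  have hBpos : 0 < B := by
    refine ENNReal.toReal_pos (measure_ball_pos volume _ one_pos).ne' measure_ball_lt_top.ne
  -- pointwise formula for `w ε x ^ r`
  have hwr : ∀ ε : ℝ, 0 < ε → ∀ x : EuclideanSpace ℝ (Fin N),
      w ε x ^ r = K ^ b * ε ^ b * (ε + ‖x‖ ^ 2) ^ (-p) := by
    intro ε hε x
    have hd : (0 : ℝ) < ε + ‖x‖ ^ 2 := by positivity
    rw [hw ε hε, Real.div_rpow (Real.rpow_nonneg (by positivity) _) (Real.rpow_nonneg hd.le _),
      ← Real.rpow_natCast, Real.rpow_natCast]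
    rw [← Real.rpow_mul (by positivity : (0:ℝ) ≤ (N : ℝ) * ((N : ℝ) - 2) * ε),
      ← Real.rpow_mul hd.le]
    have h1 : ((N : ℝ) - 2) / 8 * r = b := rfl
    have h2 : ((N : ℝ) - 2) / 4 * r = p := by rw [hpdef]; ring
    rw [h1, h2, ← hKdef, Real.mul_rpow hK.le hε.le, div_eq_mul_inv, ← Real.rpow_neg hd.le]
  -- continuity / measurability of the integrands
  have hwcont : ∀ ε : ℝ, 0 < ε → Continuous (w ε) := by
    intro ε hε
    have : w ε = fun x => ((N : ℝ) * ((N : ℝ) - 2) * ε) ^ (((N : ℝ) - 2) / 8) /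
        (ε + ‖x‖ ^ 2) ^ (((N : ℝ) - 2) / 4) := funext (hw ε hε)
    rw [this]
    apply Continuous.div continuous_const
    · exact ((continuous_const.add ((continuous_norm).pow 2)).rpow_const
        fun x => Or.inl (add_pos_of_pos_of_nonneg hε (sq_nonneg ‖x‖)).ne')
    · intro x
      exact (Real.rpow_pos_of_pos (by positivity) _).ne'
  have hwnn : ∀ ε : ℝ, 0 < ε → ∀ x, 0 ≤ w ε x := by
    intro ε hε x
    rw [hw ε hε]
    positivity
  have hvcont : ∀ ε : ℝ, 0 < ε →
      Continuous (fun x : EuclideanSpace ℝ (Fin N) => v ε x ^ r) := by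
    intro ε hε
    have : (fun x : EuclideanSpace ℝ (Fin N) => v ε x ^ r)
        = fun x => (ξ x * w ε x) ^ r := by
      funext x; rw [hv]
    rw [this]
    exact (hξ.continuous.mul (hwcont ε hε)).rpow_const fun x => Or.inr hrpos.le
  -- integrability
  have hgint : ∀ ε : ℝ, 0 < ε →
      Integrable (fun x : EuclideanSpace ℝ (Fin N) => (ε + ‖x‖ ^ 2) ^ (-p)) :=
    fun ε hε => aux_integrable' hp hε
  have hwrint : ∀ ε : ℝ, 0 < ε →
      Integrable (fun x : EuclideanSpace ℝ (Fin N) => w ε x ^ r) := by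
    intro ε hε
    have := ((hgint ε hε).const_mul (K ^ b * ε ^ b))
    exact this.congr (Filter.Eventually.of_forall fun x => ((hwr ε hε x).symm))
  have hvle : ∀ ε : ℝ, 0 < ε → ∀ x, v ε x ^ r ≤ w ε x ^ r := by
    intro ε hε x
    refine Real.rpow_le_rpow (by rw [hv]; exact mul_nonneg (hξ01 x).1 (hwnn ε hε x)) ?_ hrpos.le
    rw [hv]
    calc ξ x * w ε x ≤ 1 * w ε x := mul_le_mul_of_nonneg_right (hξ01 x).2 (hwnn ε hε x)
      _ = w ε x := one_mul _
  have hvnn : ∀ ε : ℝ, 0 < ε → ∀ x, 0 ≤ v ε x ^ r := by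
    intro ε hε x
    exact Real.rpow_nonneg (by rw [hv]; exact mul_nonneg (hξ01 x).1 (hwnn ε hε x)) _
  have hvint : ∀ ε : ℝ, 0 < ε →
      Integrable (fun x : EuclideanSpace ℝ (Fin N) => v ε x ^ r) := by
    intro ε hε
    refine (hwrint ε hε).mono' (hvcont ε hε).aestronglyMeasurable
      (Filter.Eventually.of_forall fun x => ?_)
    rw [Real.norm_eq_abs, abs_of_nonneg (hvnn ε hε x)]
    exact hvle ε hε x
  -- value of the full model integral
  have hwint_val : ∀ ε : ℝ, 0 < ε →
      (∫ x : EuclideanSpace ℝ (Fin N), w ε x ^ r) = K ^ b * J * ε ^ τ := by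
    intro ε hε
    calc (∫ x : EuclideanSpace ℝ (Fin N), w ε x ^ r)
        = ∫ x : EuclideanSpace ℝ (Fin N), K ^ b * ε ^ b * (ε + ‖x‖ ^ 2) ^ (-p) := by
          exact integral_congr_ae (Filter.Eventually.of_forall fun x => hwr ε hε x)
      _ = K ^ b * ε ^ b * ∫ x : EuclideanSpace ℝ (Fin N), (ε + ‖x‖ ^ 2) ^ (-p) :=
          integral_const_mul _ _
      _ = K ^ b * ε ^ b * (ε ^ ((N : ℝ) / 2 - p) * J) := by rw [aux_scaling p hε]
      _ = K ^ b * J * (ε ^ b * ε ^ ((N : ℝ) / 2 - p)) := by ring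
      _ = K ^ b * J * ε ^ τ := by
          rw [← Real.rpow_add hε]
          congr 2
          rw [hτdef, hbdef, hpdef]
          ring
  -- the constants
  refine ⟨K ^ b * (2 ^ (-p) * B), by positivity, K ^ b * J, ?_, min 1 (R ^ 2),
    lt_min one_pos (by positivity), ?_⟩
  · -- c₁ ≤ c₂ : compare with the integral over the unit ball
    have hmeas : MeasurableSet (ball (0 : EuclideanSpace ℝ (Fin N)) 1) := measurableSet_ball
    have h1 : (2 : ℝ) ^ (-p) * B ≤ ∫ y in ball (0 : EuclideanSpace ℝ (Fin N)) 1,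
        ((1 : ℝ) + ‖y‖ ^ 2) ^ (-p) := by
      refine setIntegral_ge_of_const_le_real hmeas measure_ball_lt_top.ne (fun y hy => ?_)
        hJint.integrableOn
      have hy1 : ‖y‖ < 1 := by simpa [mem_ball, dist_eq_norm] using hy
      have : (1 : ℝ) + ‖y‖ ^ 2 ≤ 2 := by nlinarith [norm_nonneg y]
      exact Real.rpow_le_rpow_of_nonpos (by positivity) this (neg_nonpos.2 hppos.le)
    have h2 : (∫ y in ball (0 : EuclideanSpace ℝ (Fin N)) 1,
        ((1 : ℝ) + ‖y‖ ^ 2) ^ (-p)) ≤ J := by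
      refine setIntegral_le_integral hJint (Filter.Eventually.of_forall fun y => ?_)
      exact Real.rpow_nonneg (by positivity) _
    have : (2 : ℝ) ^ (-p) * B ≤ J := le_trans h1 h2
    exact mul_le_mul_of_nonneg_left this (Real.rpow_nonneg hK.le _)
  · intro ε hε hεlt
    have hε1 : ε < 1 := lt_of_lt_of_le hεlt (min_le_left _ _)
    have hεR : ε < R ^ 2 := lt_of_lt_of_le hεlt (min_le_right _ _)
    have hsR : Real.sqrt ε < R := by
      calc Real.sqrt ε < Real.sqrt (R ^ 2) := Real.sqrt_lt_sqrt hε.le hεR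
        _ = R := Real.sqrt_sq hR.le
    constructor
    · -- lower bound via the ball of radius √ε
      set s : Set (EuclideanSpace ℝ (Fin N)) := ball 0 (Real.sqrt ε) with hsdef
      have hmeas : MeasurableSet s := measurableSet_ball
      have hμs : (volume s).toReal = ε ^ ((N : ℝ) / 2) * B := by
        rw [hsdef, Measure.addHaar_ball volume _ (Real.sqrt_nonneg ε),
          finrank_euclideanSpace_fin, ENNReal.toReal_mul,
          ENNReal.toReal_ofReal (pow_nonneg (Real.sqrt_nonneg ε) N), aux_sqrt_pow hε, hBdef]
      have hlow : ∀ x ∈ s, K ^ b * ε ^ b * (2 * ε) ^ (-p) ≤ v ε x ^ r := by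
        intro x hx
        have hxs : ‖x‖ < Real.sqrt ε := by simpa [hsdef, mem_ball, dist_eq_norm] using hx
        have hxR : ‖x‖ ≤ R := le_of_lt (lt_trans hxs hsR)
        have hξx : ξ x = 1 := hξ1 x hxR
        have hvx : v ε x = w ε x := by rw [hv, hξx, one_mul]
        have hx2 : ‖x‖ ^ 2 ≤ ε := by
          have := Real.sq_sqrt hε.le
          nlinarith [norm_nonneg x, Real.sqrt_nonneg ε]
        rw [hvx, hwr ε hε x]
        refine mul_le_mul_of_nonneg_left ?_ (by positivity)
        refine Real.rpow_le_rpow_of_nonpos (by positivity) (by linarith) (neg_nonpos.2 hppos.le)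
      have hset : K ^ b * ε ^ b * (2 * ε) ^ (-p) * (volume s).toReal ≤
          ∫ x in s, v ε x ^ r :=
        setIntegral_ge_of_const_le_real hmeas measure_ball_lt_top.ne hlow
          (hvint ε hε).integrableOn
      have hfull : (∫ x in s, v ε x ^ r) ≤ ∫ x : EuclideanSpace ℝ (Fin N), v ε x ^ r :=
        setIntegral_le_integral (hvint ε hε) (Filter.Eventually.of_forall fun x => hvnn ε hε x)
      refine le_trans (le_of_eq ?_) (le_trans hset hfull)
      rw [hμs, Real.mul_rpow (by norm_num : (0:ℝ) ≤ 2) hε.le]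
      rw [show K ^ b * ε ^ b * (2 ^ (-p) * ε ^ (-p)) * (ε ^ ((N : ℝ) / 2) * B)
          = K ^ b * (2 ^ (-p) * B) * (ε ^ b * ε ^ (-p) * ε ^ ((N : ℝ) / 2)) from by ring]
      rw [← Real.rpow_add hε, ← Real.rpow_add hε]
      congr 2
      rw [hτdef, hbdef, hpdef]
      ring
    · -- upper bound via the full model integral
      calc (∫ x : EuclideanSpace ℝ (Fin N), v ε x ^ r)
          ≤ ∫ x : EuclideanSpace ℝ (Fin N), w ε x ^ r :=
            integral_mono (hvint ε hε) (hwrint ε hε) fun x => hvle ε hε x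
        _ = K ^ b * J * ε ^ τ := hwint_val ε hε
end
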